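/- arXiv:2511.15104 — 6 statements merged into one kernel-verified Lean document; each statement's English description precedes it below -/
import Mathlib

section
/- Let A be an n×n complex matrix that is diagonalizable (there exists an invertible complex matrix Q with Q⁻¹AQ diagonal) and all of whose eigenvalues are purely imaginary (every diagonal entry of Q⁻¹AQ has real part zero). Let D_A be the unique ℂ-linear derivation of ℂ[x_1,…,x_n] with D_A(x_i) = Σ_{j=1}^n A_{ij}·x_j, and for ĥ ∈ ℂ^n let S_ĥ be the ℂ-algebra automorphism with S_ĥ(x_i) = x_i + ĥ_i. Then for every k ≥ 0 and every ĥ ∈ ℂ^n, the endomorphism S_ĥ ∘ D_A ∘ S_{−ĥ} maps the finite-dimensional submodule W of polynomials of total degree at most k into itself, and its restriction to W is diagonalizable (W has a basis of eigenvectors) with every eigenvalue having real part zero. -/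
open MvPolynomial


-- degree bound for algebra homs sending variables to degree ≤ 1 polys
lemma my_deg_aeval {n : ℕ} (g : Fin n → MvPolynomial (Fin n) ℂ)
    (hg : ∀ i, (g i).totalDegree ≤ 1) (p : MvPolynomial (Fin n) ℂ) :
    (aeval g p).totalDegree ≤ p.totalDegree := by
  conv_lhs => rw [p.as_sum]
  rw [map_sum]
  refine (totalDegree_finset_sum _ _).trans (Finset.sup_le fun m hm => ?_)
  rw [aeval_monomial]
  refine (totalDegree_mul _ _).trans ?_
  have h1 : (algebraMap ℂ (MvPolynomial (Fin n) ℂ) (coeff m p)).totalDegree = 0 := totalDegree_C _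
  rw [h1, zero_add]
  refine le_trans ?_ (le_totalDegree hm)
  rw [Finsupp.prod]
  refine (totalDegree_finset_prod _ _).trans ?_
  rw [Finsupp.sum]
  refine Finset.sum_le_sum fun i _ => ?_
  exact (totalDegree_pow _ _).trans (by
    calc m i * (g i).totalDegree ≤ m i * 1 := Nat.mul_le_mul_left _ (hg i)
    _ = m i := Nat.mul_one _)

lemma my_deg_algHom {n : ℕ} (φ : MvPolynomial (Fin n) ℂ →ₐ[ℂ] MvPolynomial (Fin n) ℂ)
    (hφ : ∀ i, (φ (X i)).totalDegree ≤ 1) (p : MvPolynomial (Fin n) ℂ) :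
    (φ p).totalDegree ≤ p.totalDegree := by
  rw [aeval_unique φ]
  exact my_deg_aeval _ hφ p

lemma my_D_pow {n : ℕ} (D : Derivation ℂ (MvPolynomial (Fin n) ℂ) (MvPolynomial (Fin n) ℂ))
    (y : MvPolynomial (Fin n) ℂ) (c : ℂ) (hy : D y = c • y) (t : ℕ) :
    D (y ^ t) = ((t : ℂ) * c) • y ^ t := by
  cases t with
  | zero => simp
  | succ t =>
      rw [Derivation.leibniz_pow, hy, Nat.succ_sub_one]
      rw [← Nat.cast_smul_eq_nsmul ℂ]
      rw [smul_eq_mul, smul_eq_C_mul, smul_eq_C_mul, smul_eq_C_mul, map_mul, pow_succ]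
      push_cast
      ring

lemma my_D_prod {n : ℕ} (D : Derivation ℂ (MvPolynomial (Fin n) ℂ) (MvPolynomial (Fin n) ℂ))
    (Y : Fin n → MvPolynomial (Fin n) ℂ) (d : Fin n → ℂ)
    (hDY : ∀ i, D (Y i) = d i • Y i) (s : Finset (Fin n)) (m : Fin n → ℕ) :
    D (∏ i ∈ s, Y i ^ m i) = (∑ i ∈ s, (m i : ℂ) * d i) • ∏ i ∈ s, Y i ^ m i := by
  induction s using Finset.induction with
  | empty => simp
  | @insert a s ha ih =>
      rw [Finset.prod_insert ha, Finset.sum_insert ha, D.leibniz, ih,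
        my_D_pow D (Y a) (d a) (hDY a) (m a)]
      rw [smul_eq_C_mul, smul_eq_C_mul, smul_eq_C_mul, smul_eq_mul, smul_eq_mul, map_add]
      ring

lemma my_sumsum {n : ℕ} (M N : Matrix (Fin n) (Fin n) ℂ) (i : Fin n) :
    ∑ j, M i j • (∑ l, N j l • (X l : MvPolynomial (Fin n) ℂ)) = ∑ l, (M * N) i l • X l := by
  simp_rw [Finset.smul_sum, smul_smul, Matrix.mul_apply, Finset.sum_smul]
  exact Finset.sum_comm

lemma my_sum_one {n : ℕ} (i : Fin n) :
    ∑ l, ((1 : Matrix (Fin n) (Fin n) ℂ) i l) • (X l : MvPolynomial (Fin n) ℂ) = X i := by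
  simp [Matrix.one_apply, ite_smul]

lemma my_exists_sigma {n : ℕ} (B Qm : Matrix (Fin n) (Fin n) ℂ)
    (hBQ : B * Qm = 1) :
    ∃ e : MvPolynomial (Fin n) ℂ ≃ₐ[ℂ] MvPolynomial (Fin n) ℂ,
      (∀ i, e (X i) = ∑ j, B i j • X j) ∧ (∀ i, e.symm (X i) = ∑ j, Qm i j • X j) := by
  have hQB : Qm * B = 1 := mul_eq_one_comm.mp hBQ
  have key : ∀ (M N : Matrix (Fin n) (Fin n) ℂ), N * M = 1 →
      (aeval fun i => ∑ j, M i j • (X j : MvPolynomial (Fin n) ℂ)).comp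
        (aeval fun i => ∑ j, N i j • X j) = AlgHom.id ℂ _ := by
    intro M N hNM
    apply MvPolynomial.algHom_ext
    intro i
    rw [AlgHom.comp_apply, aeval_X, map_sum]
    simp_rw [map_smul, aeval_X]
    rw [my_sumsum N M i, hNM, my_sum_one i, AlgHom.id_apply]
  refine ⟨AlgEquiv.ofAlgHom (aeval fun i => ∑ j, B i j • X j)
      (aeval fun i => ∑ j, Qm i j • X j) (key B Qm hQB) (key Qm B hBQ),
    fun i => by simp [AlgEquiv.ofAlgHom, aeval_X],
    fun i => by simp [AlgEquiv.ofAlgHom, aeval_X]⟩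

set_option maxHeartbeats 2000000 in
lemma my_coe_basisRestrictSupport {n : ℕ} (s : Set (Fin n →₀ ℕ)) (m : s) :
    ((basisRestrictSupport ℂ s m : restrictSupport ℂ s) : MvPolynomial (Fin n) ℂ)
      = monomial (↑m) 1 := by
  classical
  have hr := (basisRestrictSupport ℂ s).repr_self m
  ext x
  rw [coeff_monomial]
  by_cases hx : x ∈ s
  · have h2 := congrArg (fun f => f ⟨x, hx⟩) hr
    change coeff x ((basisRestrictSupport ℂ s m : restrictSupport ℂ s) : MvPolynomial (Fin n) ℂ)
      = Finsupp.single m (1:ℂ) ⟨x, hx⟩ at h2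
    rw [h2]
    rcases eq_or_ne m ⟨x, hx⟩ with h | h
    · subst h; simp
    · rw [Finsupp.single_apply, if_neg h, if_neg (fun hc => h (Subtype.ext hc))]
  · have h3 := (basisRestrictSupport ℂ s m).2
    have h4 : x ∉ (((basisRestrictSupport ℂ s m : restrictSupport ℂ s) : MvPolynomial (Fin n) ℂ)).support :=
      fun hc => hx (h3 hc)
    rw [mem_support_iff, not_not] at h4
    rw [h4, if_neg (fun hc : (↑m : Fin n →₀ ℕ) = x => hx (hc ▸ m.2))]

lemma my_deg_le_one {n : ℕ} (c : Fin n → ℂ) (e : ℂ) :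
    ((∑ j, c j • X j + C e : MvPolynomial (Fin n) ℂ)).totalDegree ≤ 1 := by
  refine (totalDegree_add _ _).trans (max_le ?_ ?_)
  · refine (totalDegree_finset_sum _ _).trans (Finset.sup_le fun j _ => ?_)
    exact (totalDegree_smul_le _ _).trans (le_of_eq (totalDegree_X j))
  · simp [totalDegree_C]


/-- Suppose the `n × n` complex matrix `A` is diagonalizable with all eigenvalues purely
imaginary, i.e. `Q⁻¹ * A * Q = diagonal d` for an invertible `Q` and `(d i).re = 0` for all `i`.
Let `D` be the derivation of `ℂ[x₁,…,xₙ]` with `D xᵢ = ∑ j, A i j • x_j`, and `S` the translation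
automorphism `xᵢ ↦ xᵢ + wᵢ` (with inverse `xᵢ ↦ xᵢ - wᵢ`). Then `S ∘ D ∘ S⁻¹` maps the
finite-dimensional submodule `W` of polynomials of total degree at most `k` into itself, and its
restriction to `W` is diagonalizable (there is a basis of `W` consisting of eigenvectors) with
every eigenvalue having zero real part. -/
theorem stmt_5 (n : ℕ) (A Q : Matrix (Fin n) (Fin n) ℂ) (hQ : IsUnit Q)
    (d : Fin n → ℂ) (hdiag : Q⁻¹ * A * Q = Matrix.diagonal d)
    (him : ∀ i, (d i).re = 0)
    (D : Derivation ℂ (MvPolynomial (Fin n) ℂ) (MvPolynomial (Fin n) ℂ))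
    (hD : ∀ i, D (X i) = ∑ j : Fin n, A i j • X j)
    (w : Fin n → ℂ)
    (S : MvPolynomial (Fin n) ℂ ≃ₐ[ℂ] MvPolynomial (Fin n) ℂ)
    (hS : ∀ i, S (X i) = X i + C (w i))
    (hS' : ∀ i, S.symm (X i) = X i - C (w i))
    (k : ℕ) :
    (∀ p ∈ restrictTotalDegree (Fin n) ℂ k,
        S (D (S.symm p)) ∈ restrictTotalDegree (Fin n) ℂ k) ∧
      ∃ E : Module.End ℂ (restrictTotalDegree (Fin n) ℂ k),
        (∀ p : restrictTotalDegree (Fin n) ℂ k,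
            (E p : MvPolynomial (Fin n) ℂ) = S (D (S.symm (p : MvPolynomial (Fin n) ℂ)))) ∧
        ∃ (ι : Type) (_ : Fintype ι) (b : Module.Basis ι ℂ (restrictTotalDegree (Fin n) ℂ k))
          (ev : ι → ℂ),
          (∀ i, E (b i) = ev i • b i) ∧ ∀ i, (ev i).re = 0 := by
  classical
  have hdet : IsUnit Q.det := (Matrix.isUnit_iff_isUnit_det Q).mp hQ
  have hQB : Q * Q⁻¹ = 1 := Matrix.mul_nonsing_inv Q hdet
  set B := Q⁻¹ with hB
  -- B * A = diagonal d * B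
  have hdB : B * A = Matrix.diagonal d * B := by
    have h1 := congrArg (fun M => M * Q⁻¹) hdiag
    simpa [Matrix.mul_assoc, hQB, ← hB] using h1
  set Y : Fin n → MvPolynomial (Fin n) ℂ := fun i => ∑ j, B i j • X j with hY
  have hDY : ∀ i, D (Y i) = d i • Y i := by
    intro i
    calc D (∑ j, B i j • X j) = ∑ j, B i j • D (X j) := by
          rw [map_sum]; simp_rw [Derivation.map_smul]
      _ = ∑ j, B i j • ∑ l, A j l • X l := by simp_rw [hD]
      _ = ∑ l, (B * A) i l • X l := my_sumsum B A i
      _ = ∑ l, (Matrix.diagonal d * B) i l • X l := by rw [hdB]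
      _ = d i • ∑ l, B i l • X l := by
          simp_rw [Matrix.diagonal_mul, Finset.smul_sum, smul_smul]
  obtain ⟨σe, hσ1, hσ2⟩ := my_exists_sigma B Q (Matrix.nonsing_inv_mul Q hdet)
  set ψ : MvPolynomial (Fin n) ℂ ≃ₐ[ℂ] MvPolynomial (Fin n) ℂ := σe.trans S with hψ
  -- degree bounds
  have hψdeg : ∀ p : MvPolynomial (Fin n) ℂ, (ψ p).totalDegree ≤ p.totalDegree := by
    refine my_deg_algHom ψ.toAlgHom (fun i => ?_)
    show (ψ (X i)).totalDegree ≤ 1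
    have : ψ (X i) = ∑ j, B i j • X j + C (∑ j, B i j * w j) := by
      rw [hψ, AlgEquiv.trans_apply, hσ1, map_sum]
      simp_rw [map_smul, hS, smul_add, Finset.sum_add_distrib, smul_eq_C_mul, ← C_mul, ← map_sum]
    rw [this]; exact my_deg_le_one _ _
  have hψsdeg : ∀ p : MvPolynomial (Fin n) ℂ, (ψ.symm p).totalDegree ≤ p.totalDegree := by
    refine my_deg_algHom ψ.symm.toAlgHom (fun i => ?_)
    show (ψ.symm (X i)).totalDegree ≤ 1
    have : ψ.symm (X i) = ∑ j, Q i j • X j + C (-(w i)) := by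
      rw [hψ, AlgEquiv.symm_trans_apply, hS', map_sub, hσ2, sub_eq_add_neg, ← map_neg,
        show (σe.symm (-C (w i)) : MvPolynomial (Fin n) ℂ) = -C (w i) by
          rw [map_neg, ← algebraMap_eq, AlgEquiv.commutes], map_neg]
    rw [this]; exact my_deg_le_one _ _
  -- eigen computation on monomial images
  have hmonσ : ∀ m : Fin n →₀ ℕ, σe (monomial m 1) = ∏ i ∈ m.support, Y i ^ m i := by
    intro m
    rw [monomial_eq, map_one, one_mul, Finsupp.prod, map_prod]
    simp_rw [map_pow, hσ1]
    rfl
  have hmonT : ∀ m : Fin n →₀ ℕ,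
      S (D (S.symm (ψ (monomial m 1))))
        = (∑ i ∈ m.support, (m i : ℂ) * d i) • ψ (monomial m 1) := by
    intro m
    have h1 : S.symm (ψ (monomial m 1)) = σe (monomial m 1) := by
      rw [hψ, AlgEquiv.trans_apply, AlgEquiv.symm_apply_apply]
    rw [h1, hmonσ, my_D_prod D Y d hDY, map_smul, ← hmonσ]
    rw [hψ, AlgEquiv.trans_apply]
  have hmonW : ∀ m : Fin n →₀ ℕ, (m.sum fun _ e => e) ≤ k →
      ψ (monomial m 1) ∈ restrictTotalDegree (Fin n) ℂ k := by
    intro m hm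
    rw [mem_restrictTotalDegree]
    refine (hψdeg _).trans ?_
    rw [totalDegree_monomial _ (one_ne_zero : (1:ℂ) ≠ 0)]
    exact hm
  have hexpand : ∀ q : MvPolynomial (Fin n) ℂ,
      ψ q = ∑ m ∈ q.support, coeff m q • ψ (monomial m 1) := by
    intro q
    conv_lhs => rw [q.as_sum]
    rw [map_sum]
    refine Finset.sum_congr rfl fun m _ => ?_
    rw [← map_smul, smul_eq_C_mul, C_mul_monomial, mul_one]
  set T : MvPolynomial (Fin n) ℂ →ₗ[ℂ] MvPolynomial (Fin n) ℂ :=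
    S.toLinearMap ∘ₗ D.toLinearMap ∘ₗ S.symm.toLinearMap with hT
  have hTapp : ∀ p, T p = S (D (S.symm p)) := fun p => rfl
  have part1 : ∀ p ∈ restrictTotalDegree (Fin n) ℂ k,
      S (D (S.symm p)) ∈ restrictTotalDegree (Fin n) ℂ k := by
    intro p hp
    have hq : ψ (ψ.symm p) = p := ψ.apply_symm_apply p
    have hdq : (ψ.symm p).totalDegree ≤ k :=
      (hψsdeg p).trans (((mem_restrictTotalDegree _ _ _).mp hp))
    rw [← hTapp, ← hq, hexpand (ψ.symm p), map_sum]
    refine Submodule.sum_mem _ fun m hm => ?_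
    rw [map_smul, hTapp, hmonT]
    exact Submodule.smul_mem _ _ (Submodule.smul_mem _ _
      (hmonW m (le_trans (le_totalDegree hm) hdq)))
  refine ⟨part1, ?_⟩
  have part1' : ∀ x ∈ restrictTotalDegree (Fin n) ℂ k,
      T x ∈ restrictTotalDegree (Fin n) ℂ k := fun x hx => part1 x hx
  refine ⟨T.restrict part1', fun p => LinearMap.restrict_coe_apply _ _ _, ?_⟩
  set sk : Set (Fin n →₀ ℕ) := {m | (m.sum fun _ e => e) ≤ k} with hsk
  have hfin0 : Finite {f : Fin n →₀ ℕ | ∀ a, f a ≤ k} :=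
    ((Set.Finite.pi' fun _ ↦ Set.finite_le_nat _).preimage
      DFunLike.coe_injective.injOn).to_subtype
  have hfin : Finite sk := by
    rw [Set.finite_coe_iff] at hfin0 ⊢
    exact hfin0.subset fun m hm i ↦ (eq_or_ne (m i) 0).elim
      (fun h ↦ h.trans_le k.zero_le) fun h ↦
        (Finset.single_le_sum (fun _ _ ↦ Nat.zero_le _) <|
          Finsupp.mem_support_iff.mpr h).trans hm
  haveI : Fintype sk := Fintype.ofFinite _
  have hmap : (restrictTotalDegree (Fin n) ℂ k).map
      (ψ.toLinearEquiv : MvPolynomial (Fin n) ℂ →ₗ[ℂ] MvPolynomial (Fin n) ℂ)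
        = restrictTotalDegree (Fin n) ℂ k := by
    apply le_antisymm
    · rintro _ ⟨x, hx, rfl⟩
      rw [mem_restrictTotalDegree]
      exact (hψdeg x).trans (((mem_restrictTotalDegree _ _ _).mp hx))
    · intro p hp
      exact ⟨ψ.symm p, (mem_restrictTotalDegree _ _ _).mpr
        ((hψsdeg p).trans (((mem_restrictTotalDegree _ _ _).mp hp))), ψ.apply_symm_apply p⟩
  set Φ : (restrictTotalDegree (Fin n) ℂ k) ≃ₗ[ℂ] (restrictTotalDegree (Fin n) ℂ k) :=
    LinearEquiv.ofSubmodules ψ.toLinearEquiv _ _ hmap with hΦ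
  set b : Module.Basis sk ℂ (restrictTotalDegree (Fin n) ℂ k) :=
    (basisRestrictSupport ℂ sk).map Φ with hb
  refine ⟨sk, inferInstance, b,
    fun m => ∑ i ∈ (↑m : Fin n →₀ ℕ).support, (((↑m : Fin n →₀ ℕ) i : ℕ) : ℂ) * d i, ?_, ?_⟩
  · intro m
    have hbm : ((b m : restrictTotalDegree (Fin n) ℂ k) : MvPolynomial (Fin n) ℂ)
        = ψ (monomial (↑m) 1) := by
      rw [hb]
      have h0 : ((Φ (basisRestrictSupport ℂ sk m) : restrictTotalDegree (Fin n) ℂ k) :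
          MvPolynomial (Fin n) ℂ)
          = ψ ((basisRestrictSupport ℂ sk m : restrictSupport ℂ sk) :
              MvPolynomial (Fin n) ℂ) := rfl
      exact h0.trans (congrArg ψ (my_coe_basisRestrictSupport sk m))
    apply Subtype.ext
    rw [SetLike.val_smul]
    rw [LinearMap.restrict_coe_apply]
    rw [hbm, hTapp, hmonT]
  · intro m
    rw [Complex.re_sum]
    refine Finset.sum_eq_zero fun i _ => ?_
    simp [Complex.mul_re, him]
end

section
/- Let A be an n×n complex matrix (n ≥ 1) that is diagonalizable: there is an invertible complex matrix Q with Q⁻¹AQ = diag(μ_1,…,μ_n). Let D_A be the unique ℂ-linear derivation of ℂ[x_1,…,x_n] with D_A(x_i) = Σ_{j=1}^n A_{ij}·x_j. Then for every k ≥ 1, D_A maps the homogeneous submodule H_k of degree k into itself, its restriction to H_k is diagonalizable, and the spectrum of this restriction equals the set { μ_{c(1)} + μ_{c(2)} + ⋯ + μ_{c(k)} : c : Fin k → Fin n }. -/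
open MvPolynomial

private lemma lin_single {n : ℕ} (μ : Fin n → ℂ) (a : Fin n) (b : ℕ) :
    ∑ i : Fin n, ((Finsupp.single a b : Fin n →₀ ℕ) i : ℂ) * μ i = (b : ℂ) * μ a := by
  have h : ∀ i : Fin n, ((Finsupp.single a b : Fin n →₀ ℕ) i : ℂ) * μ i
      = if a = i then (b : ℂ) * μ i else 0 := by
    intro i; rcases eq_or_ne a i with h | h <;> simp [Finsupp.single_apply, h]
  rw [Finset.sum_congr rfl fun i _ => h i, Finset.sum_ite_eq]
  simp

private lemma lin_add {n : ℕ} (μ : Fin n → ℂ) (d₁ d₂ : Fin n →₀ ℕ) :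
    ∑ i : Fin n, (((d₁ + d₂) : Fin n →₀ ℕ) i : ℂ) * μ i
      = (∑ i : Fin n, (d₁ i : ℂ) * μ i) + ∑ i : Fin n, (d₂ i : ℂ) * μ i := by
  rw [← Finset.sum_add_distrib]
  refine Finset.sum_congr rfl fun i _ => ?_
  simp [Finsupp.add_apply, add_mul]

private lemma lin_multiset {n : ℕ} (μ : Fin n → ℂ) (d : Fin n →₀ ℕ) :
    ((Finsupp.toMultiset d).map μ).sum = ∑ i : Fin n, (d i : ℂ) * μ i := by
  induction d using Finsupp.induction with
  | zero => simp
  | single_add a b f haf hb ih =>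
    rw [Finsupp.toMultiset_add, Multiset.map_add, Multiset.sum_add, ih,
      Finsupp.toMultiset_single, Multiset.map_nsmul, Multiset.map_singleton,
      Multiset.sum_nsmul, Multiset.sum_singleton, lin_add, lin_single]
    rw [nsmul_eq_mul, add_comm]

private lemma aux_dc {n k : ℕ} (μ : Fin n → ℂ) (d : Fin n →₀ ℕ) (hd : d.degree = k) :
    ∃ c : Fin k → Fin n, ∑ j : Fin k, μ (c j) = ∑ i : Fin n, (d i : ℂ) * μ i := by
  classical
  have hcard : Multiset.card (Finsupp.toMultiset d) = k := by
    rw [Finsupp.card_toMultiset]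
    simpa [Finsupp.degree_apply, Finsupp.sum] using hd
  set l := (Finsupp.toMultiset d).toList with hldef
  have hl : l.length = k := by
    rw [hldef, Multiset.length_toList, hcard]
  refine ⟨fun j => l.get (Fin.cast hl.symm j), ?_⟩
  have h1 : ∑ j : Fin k, μ (l.get (Fin.cast hl.symm j)) = ∑ j : Fin l.length, μ (l.get j) :=
    Equiv.sum_comp (finCongr hl.symm) (fun j => μ (l.get j))
  have h2 : (l.map μ).sum = ∑ j : Fin l.length, μ (l.get j) := by
    conv_lhs => rw [← List.ofFn_get l]
    rw [List.map_ofFn, List.sum_ofFn]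
    rfl
  have h3 : ((Finsupp.toMultiset d).map μ).sum = (l.map μ).sum := by
    conv_lhs => rw [← Multiset.coe_toList (Finsupp.toMultiset d)]
    rw [Multiset.map_coe, Multiset.sum_coe]
  rw [h1, ← h2, ← h3, lin_multiset]

private lemma aux_cd {n k : ℕ} (μ : Fin n → ℂ) (c : Fin k → Fin n) :
    ∃ d : Fin n →₀ ℕ, d.degree = k ∧
      ∑ i : Fin n, (d i : ℂ) * μ i = ∑ j : Fin k, μ (c j) := by
  classical
  refine ⟨∑ j : Fin k, Finsupp.single (c j) 1, ?_, ?_⟩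
  · rw [show Finsupp.degree (∑ j : Fin k, Finsupp.single (c j) 1)
        = Finsupp.weight 1 (∑ j : Fin k, Finsupp.single (c j) 1) from
        by rw [Finsupp.degree_eq_weight_one]; rfl]
    rw [map_sum]
    simp [Finsupp.weight_apply, Finsupp.sum_single_index]
  · have h1 : ∀ i : Fin n, (((∑ j : Fin k, Finsupp.single (c j) 1) : Fin n →₀ ℕ) i : ℂ) * μ i
        = ∑ j : Fin k, ((Finsupp.single (c j) 1 : Fin n →₀ ℕ) i : ℂ) * μ i := by
      intro i
      rw [Finsupp.finset_sum_apply, Nat.cast_sum, Finset.sum_mul]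
    rw [Finset.sum_congr rfl fun i _ => h1 i, Finset.sum_comm]
    refine Finset.sum_congr rfl fun j _ => ?_
    rw [lin_single]
    simp


/-- Suppose the `n × n` complex matrix `A` (with `n ≥ 1`) is diagonalizable:
`Q⁻¹ * A * Q = diagonal μ` for an invertible `Q`. Let `D` be the derivation of `ℂ[x₁,…,xₙ]` with
`D xᵢ = ∑ j, A i j • x_j`. Then for every `k ≥ 1`, `D` maps the homogeneous submodule `H_k` of
degree `k` into itself, its restriction to `H_k` is diagonalizable, and the spectrum of this
restriction equals `{ μ (c 1) + ⋯ + μ (c k) : c : Fin k → Fin n }`. -/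
theorem stmt_6 (n : ℕ) (hn : 1 ≤ n) (A Q : Matrix (Fin n) (Fin n) ℂ) (hQ : IsUnit Q)
    (μ : Fin n → ℂ) (hdiag : Q⁻¹ * A * Q = Matrix.diagonal μ)
    (D : Derivation ℂ (MvPolynomial (Fin n) ℂ) (MvPolynomial (Fin n) ℂ))
    (hD : ∀ i, D (X i) = ∑ j : Fin n, A i j • X j)
    (k : ℕ) (hk : 1 ≤ k) :
    (∀ p ∈ homogeneousSubmodule (Fin n) ℂ k, D p ∈ homogeneousSubmodule (Fin n) ℂ k) ∧
      ∃ E : Module.End ℂ (homogeneousSubmodule (Fin n) ℂ k),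
        (∀ p : homogeneousSubmodule (Fin n) ℂ k,
            (E p : MvPolynomial (Fin n) ℂ) = D (p : MvPolynomial (Fin n) ℂ)) ∧
        (∃ (ι : Type) (_ : Fintype ι) (b : Module.Basis ι ℂ (homogeneousSubmodule (Fin n) ℂ k))
          (ev : ι → ℂ), ∀ i, E (b i) = ev i • b i) ∧
        spectrum ℂ E = {z : ℂ | ∃ c : Fin k → Fin n, z = ∑ j : Fin k, μ (c j)} := by
  classical
  have hdet : IsUnit Q.det := (Matrix.isUnit_iff_isUnit_det Q).mp hQ
  have hRQ : Q⁻¹ * Q = 1 := Matrix.nonsing_inv_mul Q hdet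
  have hQR : Q * Q⁻¹ = 1 := Matrix.mul_nonsing_inv Q hdet
  have hRA : Q⁻¹ * A = Matrix.diagonal μ * Q⁻¹ := by
    have h := congrArg (· * Q⁻¹) hdiag
    simpa [Matrix.mul_assoc, hQR, Matrix.mul_one] using h
  set y : Fin n → MvPolynomial (Fin n) ℂ := fun i => ∑ j, Q⁻¹ i j • X j with hy
  -- a computation used repeatedly
  have haux : ∀ (M N : Matrix (Fin n) (Fin n) ℂ) (i : Fin n),
      (aeval (fun i => ∑ j, N i j • X j) : MvPolynomial (Fin n) ℂ →ₐ[ℂ] MvPolynomial (Fin n) ℂ)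
        (∑ j, M i j • X j) = ∑ l, (M * N) i l • X l := by
    intro M N i
    rw [map_sum]
    simp only [map_smul, aeval_X, Finset.smul_sum, smul_smul]
    rw [Finset.sum_comm]
    refine Finset.sum_congr rfl fun l _ => ?_
    rw [Matrix.mul_apply, Finset.sum_smul]
  have hDy : ∀ i, D (y i) = μ i • y i := by
    intro i
    have h1 : D (y i) = ∑ l, (Q⁻¹ * A) i l • X l := by
      rw [hy]
      simp only [map_sum, Derivation.map_smul, hD, Finset.smul_sum, smul_smul]
      rw [Finset.sum_comm]
      refine Finset.sum_congr rfl fun l _ => ?_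
      rw [Matrix.mul_apply, Finset.sum_smul]
    rw [h1, hRA, hy, Finset.smul_sum]
    refine Finset.sum_congr rfl fun l _ => ?_
    rw [Matrix.diagonal_mul, smul_smul]
  set f : MvPolynomial (Fin n) ℂ →ₐ[ℂ] MvPolynomial (Fin n) ℂ := aeval y with hfdef
  set g : MvPolynomial (Fin n) ℂ →ₐ[ℂ] MvPolynomial (Fin n) ℂ :=
    aeval (fun i => ∑ j, Q i j • X j) with hgdef
  have hgf : ∀ p, g (f p) = p := by
    have h : g.comp f = AlgHom.id ℂ _ := by
      apply MvPolynomial.algHom_ext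
      intro i
      rw [AlgHom.comp_apply, AlgHom.id_apply, hfdef, aeval_X]
      rw [hy, hgdef, haux Q⁻¹ Q i, hRQ]
      simp [Matrix.one_apply]
    intro p
    exact congrArg (· p) h
  have hfg : ∀ p, f (g p) = p := by
    have h : f.comp g = AlgHom.id ℂ _ := by
      apply MvPolynomial.algHom_ext
      intro i
      rw [AlgHom.comp_apply, AlgHom.id_apply, hgdef, aeval_X, hfdef, hy, haux Q Q⁻¹ i, hQR]
      simp [Matrix.one_apply]
    intro p
    exact congrArg (· p) h
  -- eigen computation on products of the y's
  have hpow : ∀ (a : Fin n) (b : ℕ), b ≠ 0 → D (y a ^ b) = ((b : ℂ) * μ a) • y a ^ b := by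
    intro a b hb
    obtain ⟨m, rfl⟩ := Nat.exists_eq_succ_of_ne_zero hb
    rw [Derivation.leibniz_pow, hDy, Nat.succ_sub_one]
    rw [smul_comm (y a ^ m) (μ a) (y a), ← Nat.cast_smul_eq_nsmul ℂ (m + 1), smul_smul,
      smul_eq_mul (α := MvPolynomial (Fin n) ℂ), ← pow_succ]
  have key : ∀ d : Fin n →₀ ℕ,
      D (d.prod fun i e => y i ^ e)
        = (∑ i : Fin n, (d i : ℂ) * μ i) • (d.prod fun i e => y i ^ e) := by
    intro d
    induction d using Finsupp.induction with
    | zero => simp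
    | single_add a b f haf hb ih =>
      rw [Finsupp.prod_add_index' (fun i => pow_zero (y i)) (fun i e₁ e₂ => pow_add (y i) e₁ e₂),
        Finsupp.prod_single_index (h := fun i e => y i ^ e) (pow_zero (y a)),
        Derivation.leibniz, ih, hpow a b hb,
        lin_add, lin_single]
      simp only [smul_eq_mul, mul_smul_comm, add_smul]
      rw [mul_comm (f.prod fun i e => y i ^ e) (y a ^ b), add_comm]
  -- homogeneity facts
  have hy1 : ∀ i, (y i).IsHomogeneous 1 := by
    intro i
    rw [← mem_homogeneousSubmodule, hy]
    exact Submodule.sum_mem _ fun j _ => Submodule.smul_mem _ _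
      ((mem_homogeneousSubmodule _ _).mpr (isHomogeneous_X ℂ j))
  have hfd : ∀ d : Fin n →₀ ℕ, (d.prod fun i e => y i ^ e).IsHomogeneous d.degree := by
    intro d
    have h := MvPolynomial.IsHomogeneous.prod d.support (fun i => y i ^ d i) (fun i => d i)
      (fun i _ => by simpa using (hy1 i).pow (d i))
    simpa [Finsupp.prod, Finsupp.degree_apply] using h
  -- the index set
  set s : Set (Fin n →₀ ℕ) := {d | d.degree = k} with hs
  have hsfin : s.Finite := (Finsupp.finite_of_degree_le k).subset (fun d hd => le_of_eq hd)
  haveI : Fintype s := hsfin.fintype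
  have hHk : homogeneousSubmodule (Fin n) ℂ k = restrictSupport ℂ s :=
    homogeneousSubmodule_eq_finsupp_supported (Fin n) ℂ k
  let e0 : restrictSupport ℂ s ≃ₗ[ℂ] homogeneousSubmodule (Fin n) ℂ k :=
    LinearEquiv.ofEq _ _ hHk.symm
  let b0 : Module.Basis s ℂ (homogeneousSubmodule (Fin n) ℂ k) := (basisRestrictSupport ℂ s).map e0
  have hmono : ∀ d : s, monomial (d : Fin n →₀ ℕ) (1 : ℂ) ∈ homogeneousSubmodule (Fin n) ℂ k :=
    fun d => (mem_homogeneousSubmodule _ _).mpr (isHomogeneous_monomial 1 d.2)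
  have hb0 : ∀ d : s, (b0 d : MvPolynomial (Fin n) ℂ) = monomial (d : Fin n →₀ ℕ) 1 := by
    intro d
    have : b0 d = ⟨monomial (d : Fin n →₀ ℕ) 1, hmono d⟩ := by
      apply b0.repr.injective
      rw [Module.Basis.repr_self]
      show _ = (b0.repr) _
      rw [show b0.repr = e0.symm.trans (basisRestrictSupport ℂ s).repr from Module.Basis.map_repr _ _]
      ext e
      show _ = coeff (e : Fin n →₀ ℕ) (monomial (d : Fin n →₀ ℕ) (1 : ℂ))
      rw [coeff_monomial, Finsupp.single_apply]
      simp [Subtype.ext_iff]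
    rw [this]
  -- generic: substitution by homogeneous degree-1 polys preserves H_k
  have hprod : ∀ (w : Fin n → MvPolynomial (Fin n) ℂ), (∀ i, (w i).IsHomogeneous 1) →
      ∀ d : Fin n →₀ ℕ, (d.prod fun i e => w i ^ e).IsHomogeneous d.degree := by
    intro w hw d
    have h := MvPolynomial.IsHomogeneous.prod d.support (fun i => w i ^ d i) (fun i => d i)
      (fun i _ => by simpa using (hw i).pow (d i))
    simpa [Finsupp.prod, Finsupp.degree_apply] using h
  have hgen : ∀ (w : Fin n → MvPolynomial (Fin n) ℂ), (∀ i, (w i).IsHomogeneous 1) →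
      ∀ p ∈ homogeneousSubmodule (Fin n) ℂ k,
        aeval w p ∈ homogeneousSubmodule (Fin n) ℂ k := by
    intro w hw p hp
    rw [p.as_sum, map_sum]
    apply Submodule.sum_mem
    intro v hv
    have hvd : v.degree = k := by
      have := (mem_homogeneousSubmodule _ _).mp hp (MvPolynomial.mem_support_iff.mp hv)
      rwa [Finsupp.degree_eq_weight_one]
    rw [aeval_monomial, mem_homogeneousSubmodule]
    have := ((hprod w hw v).C_mul (coeff v p))
    rw [hvd] at this
    simpa [algebraMap_eq] using this
  have hw1g : ∀ i : Fin n, (∑ j, Q i j • X j : MvPolynomial (Fin n) ℂ).IsHomogeneous 1 := by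
    intro i
    rw [← mem_homogeneousSubmodule]
    exact Submodule.sum_mem _ fun j _ => Submodule.smul_mem _ _
      ((mem_homogeneousSubmodule _ _).mpr (isHomogeneous_X ℂ j))
  have hfmem : ∀ p ∈ homogeneousSubmodule (Fin n) ℂ k,
      f p ∈ homogeneousSubmodule (Fin n) ℂ k := by
    intro p hp; rw [hfdef]; exact hgen y hy1 p hp
  have hgmem : ∀ p ∈ homogeneousSubmodule (Fin n) ℂ k,
      g p ∈ homogeneousSubmodule (Fin n) ℂ k := by
    intro p hp; rw [hgdef]; exact hgen _ hw1g p hp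
  -- the linear equivalence of H_k induced by f
  let u := f.toLinearMap.restrict hfmem
  let v := g.toLinearMap.restrict hgmem
  have huv : u.comp v = LinearMap.id := by
    apply LinearMap.ext; intro x; apply Subtype.ext
    show f (g (x : MvPolynomial (Fin n) ℂ)) = (x : MvPolynomial (Fin n) ℂ)
    exact hfg _
  have hvu : v.comp u = LinearMap.id := by
    apply LinearMap.ext; intro x; apply Subtype.ext
    show g (f (x : MvPolynomial (Fin n) ℂ)) = (x : MvPolynomial (Fin n) ℂ)
    exact hgf _
  let φ : homogeneousSubmodule (Fin n) ℂ k ≃ₗ[ℂ] homogeneousSubmodule (Fin n) ℂ k :=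
    LinearEquiv.ofLinear u v huv hvu
  let b : Module.Basis s ℂ (homogeneousSubmodule (Fin n) ℂ k) := b0.map φ
  have hbval : ∀ d : s, (b d : MvPolynomial (Fin n) ℂ)
      = (d : Fin n →₀ ℕ).prod fun i e => y i ^ e := by
    intro d
    show (φ (b0 d) : MvPolynomial (Fin n) ℂ) = _
    have h1 : (φ (b0 d) : MvPolynomial (Fin n) ℂ) = f (b0 d : MvPolynomial (Fin n) ℂ) := rfl
    rw [h1, hb0, hfdef, aeval_monomial]
    simp
  let ev : s → ℂ := fun d => ∑ i : Fin n, ((d : Fin n →₀ ℕ) i : ℂ) * μ i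
  have hDb : ∀ d : s, D ((b d : MvPolynomial (Fin n) ℂ)) = ev d • (b d : MvPolynomial (Fin n) ℂ) := by
    intro d
    rw [hbval, key]
  have hDmem : ∀ p ∈ homogeneousSubmodule (Fin n) ℂ k,
      D p ∈ homogeneousSubmodule (Fin n) ℂ k := by
    intro p hp
    have hp' : p = ∑ d : s, (b.repr ⟨p, hp⟩ d) • ((b d : MvPolynomial (Fin n) ℂ)) := by
      have h := congrArg Subtype.val (b.sum_repr ⟨p, hp⟩).symm
      simpa only [Submodule.coe_sum, Submodule.coe_smul] using h
    rw [hp', map_sum]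
    apply Submodule.sum_mem
    intro d _
    rw [Derivation.map_smul, hDb]
    exact Submodule.smul_mem _ _ (Submodule.smul_mem _ _ (b d).2)
  let E : Module.End ℂ (homogeneousSubmodule (Fin n) ℂ k) := D.toLinearMap.restrict hDmem
  have hEapp : ∀ p : homogeneousSubmodule (Fin n) ℂ k,
      (E p : MvPolynomial (Fin n) ℂ) = D (p : MvPolynomial (Fin n) ℂ) := fun p => rfl
  have heig : ∀ d : s, E (b d) = ev d • b d := by
    intro d
    apply Subtype.ext
    rw [hEapp, hDb]
    rfl
  haveI : Module.Finite ℂ (homogeneousSubmodule (Fin n) ℂ k) := Module.Finite.of_basis b0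
  have hrep : ∀ (w : homogeneousSubmodule (Fin n) ℂ k) (d : s),
      b.repr (E w) d = ev d * b.repr w d := by
    intro w d
    have h1 : E w = ∑ e : s, (b.repr w e * ev e) • b e := by
      conv_lhs => rw [← b.sum_repr w]
      rw [map_sum]
      refine Finset.sum_congr rfl fun e _ => ?_
      rw [map_smul, heig, smul_smul]
    rw [h1, map_sum, Finsupp.finset_sum_apply]
    have h2 : ∀ e : s, ((b.repr ((b.repr w e * ev e) • b e)) d)
        = if e = d then b.repr w e * ev e else 0 := by
      intro e
      rw [map_smul, Module.Basis.repr_self, Finsupp.smul_apply, Finsupp.single_apply]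
      split <;> simp
    rw [Finset.sum_congr rfl fun e _ => h2 e, Finset.sum_ite_eq' Finset.univ d
      (fun e => b.repr w e * ev e)]
    simp [mul_comm]
  have hEspec : spectrum ℂ E = {z : ℂ | ∃ c : Fin k → Fin n, z = ∑ j : Fin k, μ (c j)} := by
    ext z
    simp only [Set.mem_setOf_eq]
    constructor
    · intro hz
      have hev : Module.End.HasEigenvalue E z := Module.End.hasEigenvalue_iff_mem_spectrum.mpr hz
      obtain ⟨w, hw⟩ := hev.exists_hasEigenvector
      have hEw : E w = z • w := Module.End.mem_eigenspace_iff.mp hw.1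
      have hw0 : b.repr w ≠ 0 := by
        intro h
        exact hw.2 (by simpa using (LinearEquiv.map_eq_zero_iff b.repr).mp h)
      obtain ⟨d, hd⟩ : ∃ d : s, b.repr w d ≠ 0 := by
        by_contra h
        push_neg at h
        exact hw0 (Finsupp.ext fun e => h e)
      have h2 : ev d * b.repr w d = z * b.repr w d := by
        rw [← hrep, hEw, map_smul]
        simp
      have hzd : z = ev d := (mul_right_cancel₀ hd h2).symm
      obtain ⟨c, hc⟩ := aux_dc μ (d : Fin n →₀ ℕ) d.2
      exact ⟨c, by rw [hzd]; exact hc.symm⟩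
    · rintro ⟨c, rfl⟩
      obtain ⟨d, hdk, hdsum⟩ := aux_cd μ c
      have hds : d ∈ s := hdk
      have hev : Module.End.HasEigenvalue E (∑ j : Fin k, μ (c j)) := by
        apply Module.End.hasEigenvalue_of_hasEigenvector (x := b ⟨d, hds⟩)
        refine ⟨Module.End.mem_eigenspace_iff.mpr ?_, b.ne_zero _⟩
        rw [heig, show ev ⟨d, hds⟩ = ∑ j : Fin k, μ (c j) from hdsum]
      exact Module.End.hasEigenvalue_iff_mem_spectrum.mp hev
  exact ⟨hDmem, E, hEapp, ⟨↥s, inferInstance, b, ev, heig⟩, hEspec⟩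
end

section
/- Let A be an n×n complex matrix (n ≥ 1) that is diagonalizable: there is an invertible complex matrix Q with Q⁻¹AQ = diag(μ_1,…,μ_n). Let D_A be the unique ℂ-linear derivation of ℂ[x_1,…,x_n] with D_A(x_i) = Σ_{j=1}^n A_{ij}·x_j, and let W_k be the submodule of polynomials of total degree at most k. Then D_A maps W_k into itself and the spectrum of the restriction of D_A to W_k equals {0} ∪ ⋃_{j=1}^{k} { μ_{c(1)} + ⋯ + μ_{c(j)} : c : Fin j → Fin n }, i.e., the set of all sums of at most k eigenvalues of A (with the empty sum 0 included). -/
open MvPolynomial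

-- weight of a monomial exponent
noncomputable def wt {n : ℕ} (μ : Fin n → ℂ) (m : Fin n →₀ ℕ) : ℂ :=
  ∑ i : Fin n, (m i : ℂ) * μ i

lemma wt_add {n : ℕ} (μ : Fin n → ℂ) (a b : Fin n →₀ ℕ) :
    wt μ (a + b) = wt μ a + wt μ b := by
  simp [wt, add_mul, Finset.sum_add_distrib]

lemma wt_single {n : ℕ} (μ : Fin n → ℂ) (a : Fin n) : wt μ (Finsupp.single a 1) = μ a := by
  rw [wt, Finset.sum_eq_single a] <;> simp +contextual [Finsupp.single_apply, eq_comm]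

-- degree bound for mkDerivation with linear values
lemma deg_mkDerivation_le {n : ℕ} (f : Fin n → MvPolynomial (Fin n) ℂ)
    (hf : ∀ i, (f i).totalDegree ≤ 1) (p : MvPolynomial (Fin n) ℂ) :
    (mkDerivation ℂ f p).totalDegree ≤ p.totalDegree := by
  conv_lhs => rw [p.as_sum, map_sum]
  refine (totalDegree_finset_sum _ _).trans (Finset.sup_le fun m hm => ?_)
  rw [mkDerivation_monomial]
  refine (totalDegree_smul_le _ _).trans ?_
  refine (totalDegree_finset_sum _ _).trans (Finset.sup_le fun i hi => ?_)
  simp only [smul_eq_mul]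
  have h1 : (m - Finsupp.single i 1).sum (fun _ e => e) + 1 ≤ m.sum fun _ e => e := by
    have hi' : 1 ≤ m i := Nat.one_le_iff_ne_zero.2 (Finsupp.mem_support_iff.1 hi)
    have : (m - Finsupp.single i 1) + Finsupp.single i 1 = m := by
      ext j
      rw [Finsupp.add_apply, Finsupp.tsub_apply, Finsupp.single_apply]
      by_cases h : i = j
      · subst h; simpa using Nat.sub_add_cancel hi'
      · simp [h]
    calc (m - Finsupp.single i 1).sum (fun _ e => e) + 1
        ≤ ((m - Finsupp.single i 1) + Finsupp.single i 1).sum fun _ e => e := by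
          rw [Finsupp.sum_add_index (by simp) (by simp)]; simp
      _ = m.sum fun _ e => e := by rw [this]
  calc ((monomial (m - Finsupp.single i 1) ((m i : ℂ)) * f i)).totalDegree
      ≤ (m - Finsupp.single i 1).sum (fun _ e => e) + (f i).totalDegree := by
        refine (totalDegree_mul _ _).trans (add_le_add (totalDegree_monomial_le _ _) le_rfl)
    _ ≤ m.sum fun _ e => e := le_trans (by exact add_le_add le_rfl (hf i)) h1
    _ ≤ p.totalDegree := le_totalDegree hm

-- the diagonal derivation acts on monomials by wt
lemma diagDeriv_monomial {n : ℕ} (μ : Fin n → ℂ) (m : Fin n →₀ ℕ) (c : ℂ) :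
    mkDerivation ℂ (fun i => μ i • (X i : MvPolynomial (Fin n) ℂ)) (monomial m c)
      = wt μ m • monomial m c := by
  rw [mkDerivation_monomial]
  have key : ∀ i ∈ m.support,
      monomial (m - Finsupp.single i 1) ((m i : ℂ)) • (μ i • (X i : MvPolynomial (Fin n) ℂ))
        = ((m i : ℂ) * μ i) • monomial m (1:ℂ) := by
    intro i hi
    have hi' : 1 ≤ m i := Nat.one_le_iff_ne_zero.2 (Finsupp.mem_support_iff.1 hi)
    have hms : (m - Finsupp.single i 1) + Finsupp.single i 1 = m := by
      ext j
      rw [Finsupp.add_apply, Finsupp.tsub_apply, Finsupp.single_apply]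
      by_cases h : i = j
      · subst h; simpa using Nat.sub_add_cancel hi'
      · simp [h]
    rw [smul_eq_mul, mul_smul_comm, X, monomial_mul, hms, mul_one, mul_smul,
      smul_monomial, smul_monomial, smul_eq_mul, smul_eq_mul, mul_one, mul_comm]
    rw [smul_monomial, smul_eq_mul]
  rw [Finsupp.sum, Finset.sum_congr rfl key, ← Finset.sum_smul]
  have hsum : (∑ i ∈ m.support, (m i : ℂ) * μ i) = wt μ m := by
    rw [wt]
    refine Finset.sum_subset (f := fun i => (m i : ℂ) * μ i) (Finset.subset_univ m.support) ?_
    intro x _ hx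
    beta_reduce
    rw [Finsupp.notMem_support_iff.1 hx]
    simp
  rw [hsum, smul_comm, smul_monomial, smul_eq_mul, mul_one]

lemma coeff_diagDeriv {n : ℕ} (μ : Fin n → ℂ) (p : MvPolynomial (Fin n) ℂ) (m : Fin n →₀ ℕ) :
    coeff m (mkDerivation ℂ (fun i => μ i • (X i : MvPolynomial (Fin n) ℂ)) p)
      = wt μ m * coeff m p := by
  induction p using MvPolynomial.induction_on' with
  | monomial m' c =>
    rw [diagDeriv_monomial, coeff_smul, smul_eq_mul, coeff_monomial]
    by_cases h : m' = m
    · subst h; rfl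
    · simp [h]
  | add p q hp hq => rw [map_add, coeff_add, coeff_add, hp, hq, mul_add]

-- degree bound for linear substitution
lemma deg_aeval_le {n : ℕ} (f : Fin n → MvPolynomial (Fin n) ℂ)
    (hf : ∀ i, (f i).totalDegree ≤ 1) (p : MvPolynomial (Fin n) ℂ) :
    (aeval f p).totalDegree ≤ p.totalDegree := by
  conv_lhs => rw [p.as_sum, map_sum]
  refine (totalDegree_finset_sum _ _).trans (Finset.sup_le fun m hm => ?_)
  rw [aeval_monomial]
  refine (totalDegree_mul _ _).trans ?_
  have h1 : (algebraMap ℂ (MvPolynomial (Fin n) ℂ) (coeff m p)).totalDegree = 0 :=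
    totalDegree_C _
  rw [h1, zero_add]
  calc (m.prod fun i k => f i ^ k).totalDegree
      ≤ ∑ i ∈ m.support, ((f i) ^ (m i)).totalDegree := totalDegree_finset_prod _ _
    _ ≤ ∑ i ∈ m.support, m i := by
        refine Finset.sum_le_sum fun i _ => (totalDegree_pow _ _).trans ?_
        exact (Nat.mul_le_mul_left (m i) (hf i)).trans (by simp)
    _ ≤ p.totalDegree := le_totalDegree hm

-- intertwining
lemma intertwine {n : ℕ} (f : Fin n → MvPolynomial (Fin n) ℂ)
    (D D' : Derivation ℂ (MvPolynomial (Fin n) ℂ) (MvPolynomial (Fin n) ℂ))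
    (h : ∀ i, D (aeval (R := ℂ) f (X i)) = aeval (R := ℂ) f (D' (X i))) (p : MvPolynomial (Fin n) ℂ) :
    D (aeval f p) = aeval f (D' p) := by
  induction p using MvPolynomial.induction_on with
  | C c =>
    rw [aeval_C]
    have h1 : D (algebraMap ℂ (MvPolynomial (Fin n) ℂ) c) = 0 := D.map_algebraMap c
    have h2 : D' (C c) = 0 := derivation_C D' c
    rw [h1, h2, map_zero]
  | add p q hp hq => rw [map_add, map_add, hp, hq, map_add, map_add]
  | mul_X p i hp =>
    rw [map_mul, Derivation.leibniz, Derivation.leibniz, map_add, smul_eq_mul, smul_eq_mul,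
      smul_eq_mul, smul_eq_mul, map_mul, map_mul, hp, h i]

lemma wt_single' {n : ℕ} (μ : Fin n → ℂ) (a : Fin n) (b : ℕ) :
    wt μ (Finsupp.single a b) = (b : ℂ) * μ a := by
  rw [wt, Finset.sum_eq_single a] <;> simp +contextual [Finsupp.single_apply, eq_comm]

lemma wt_zero {n : ℕ} (μ : Fin n → ℂ) : wt μ 0 = 0 := by simp [wt]

lemma toMultiset_map_sum {n : ℕ} (μ : Fin n → ℂ) (m : Fin n →₀ ℕ) :
    ((Finsupp.toMultiset m).map μ).sum = wt μ m := by
  induction m using Finsupp.induction with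
  | zero => simp [wt_zero]
  | single_add a b f _ _ ih =>
    rw [Finsupp.toMultiset_add, Multiset.map_add, Multiset.sum_add, ih, wt_add, wt_single',
      Finsupp.toMultiset_single, Multiset.map_nsmul, Multiset.sum_nsmul, Multiset.map_singleton,
      Multiset.sum_singleton, nsmul_eq_mul, add_comm]

lemma exists_enum {n d : ℕ} (μ : Fin n → ℂ) (m : Fin n →₀ ℕ)
    (hd : (m.sum fun _ e => e) = d) : ∃ c : Fin d → Fin n, wt μ m = ∑ i : Fin d, μ (c i) := by
  classical
  set l := (Finsupp.toMultiset m).toList with hl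
  have hlen : l.length = d := by
    rw [hl, Multiset.length_toList, Finsupp.card_toMultiset, ← hd]; rfl
  subst hlen
  refine ⟨l.get, ?_⟩
  have : ∑ i : Fin l.length, μ (l.get i) = (l.map μ).sum := by
    rw [← List.sum_ofFn]; exact congrArg List.sum (List.ofFn_getElem_eq_map l μ)
  rw [this, ← Multiset.sum_coe, ← Multiset.map_coe, hl, Multiset.coe_toList, toMultiset_map_sum]

lemma wt_sum {n : ℕ} (μ : Fin n → ℂ) {ι : Type*} (s : Finset ι) (g : ι → (Fin n →₀ ℕ)) :
    wt μ (∑ i ∈ s, g i) = ∑ i ∈ s, wt μ (g i) := by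
  classical
  induction s using Finset.induction with
  | empty => simp [wt_zero]
  | insert a s hx ih => rw [Finset.sum_insert hx, Finset.sum_insert hx, wt_add, ih]

lemma degm_sum {n : ℕ} {ι : Type*} (s : Finset ι) (g : ι → (Fin n →₀ ℕ)) :
    ((∑ i ∈ s, g i).sum fun _ e => e) = ∑ i ∈ s, ((g i).sum fun _ e => e) := by
  classical
  induction s using Finset.induction with
  | empty => simp
  | insert a s hx ih =>
    rw [Finset.sum_insert hx, Finset.sum_insert hx, Finsupp.sum_add_index (by simp) (by simp), ih]

-- the swap computation
lemma sum_smul_swap {n : ℕ} (B C : Matrix (Fin n) (Fin n) ℂ) (i : Fin n) :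
    ∑ j : Fin n, B i j • (∑ l : Fin n, C j l • (X l : MvPolynomial (Fin n) ℂ))
      = ∑ l : Fin n, (B * C) i l • (X l : MvPolynomial (Fin n) ℂ) := by
  simp only [Finset.smul_sum, smul_smul, Matrix.mul_apply, Finset.sum_smul]
  exact Finset.sum_comm

/-- Suppose the `n × n` complex matrix `A` (with `n ≥ 1`) is diagonalizable:
`Q⁻¹ * A * Q = diagonal μ` for an invertible `Q`. Let `D` be the derivation of `ℂ[x₁,…,xₙ]` with
`D xᵢ = ∑ j, A i j • x_j`, and `W_k` the submodule of polynomials of total degree at most `k`.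
Then `D` maps `W_k` into itself and the spectrum of the restriction of `D` to `W_k` is the set of
all sums of at most `k` eigenvalues of `A` (including the empty sum `0`). -/
theorem stmt_7 (n : ℕ) (hn : 1 ≤ n) (A Q : Matrix (Fin n) (Fin n) ℂ) (hQ : IsUnit Q)
    (μ : Fin n → ℂ) (hdiag : Q⁻¹ * A * Q = Matrix.diagonal μ)
    (D : Derivation ℂ (MvPolynomial (Fin n) ℂ) (MvPolynomial (Fin n) ℂ))
    (hD : ∀ i, D (X i) = ∑ j : Fin n, A i j • X j)
    (k : ℕ) :
    (∀ p ∈ restrictTotalDegree (Fin n) ℂ k, D p ∈ restrictTotalDegree (Fin n) ℂ k) ∧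
      ∃ E : Module.End ℂ (restrictTotalDegree (Fin n) ℂ k),
        (∀ p : restrictTotalDegree (Fin n) ℂ k,
            (E p : MvPolynomial (Fin n) ℂ) = D (p : MvPolynomial (Fin n) ℂ)) ∧
        spectrum ℂ E =
          {z : ℂ | z = 0 ∨ ∃ j : ℕ, 1 ≤ j ∧ j ≤ k ∧
            ∃ c : Fin j → Fin n, z = ∑ i : Fin j, μ (c i)} := by
  classical
  -- linear values have degree ≤ 1
  have hlin : ∀ (B : Matrix (Fin n) (Fin n) ℂ) (i : Fin n),
      (∑ j : Fin n, B i j • (X j : MvPolynomial (Fin n) ℂ)).totalDegree ≤ 1 := by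
    intro B i
    refine (totalDegree_finset_sum _ _).trans (Finset.sup_le fun j _ => ?_)
    exact (totalDegree_smul_le _ _).trans (le_of_eq (totalDegree_X j))
  have hXlin : ∀ i : Fin n, ((μ i) • (X i : MvPolynomial (Fin n) ℂ)).totalDegree ≤ 1 :=
    fun i => (totalDegree_smul_le _ _).trans (le_of_eq (totalDegree_X i))
  -- identify D
  have hDeq : D = mkDerivation ℂ (fun i => ∑ j : Fin n, A i j • X j) := by
    apply derivation_ext
    intro i
    rw [hD i, mkDerivation_X]
  -- invariance of W_k under D
  have hinv : ∀ p ∈ restrictTotalDegree (Fin n) ℂ k, D p ∈ restrictTotalDegree (Fin n) ℂ k := by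
    intro p hp
    rw [mem_restrictTotalDegree] at hp ⊢
    rw [hDeq]
    exact (deg_mkDerivation_le _ (hlin A) p).trans hp
  refine ⟨hinv, ?_⟩
  -- the diagonal derivation
  set D' : Derivation ℂ (MvPolynomial (Fin n) ℂ) (MvPolynomial (Fin n) ℂ) :=
    mkDerivation ℂ (fun i => μ i • X i) with hD'
  have hinv' : ∀ p ∈ restrictTotalDegree (Fin n) ℂ k,
      D' p ∈ restrictTotalDegree (Fin n) ℂ k := by
    intro p hp
    rw [mem_restrictTotalDegree] at hp ⊢
    exact (deg_mkDerivation_le _ hXlin p).trans hp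
  -- matrices
  have hQdet : IsUnit Q.det := (Matrix.isUnit_iff_isUnit_det Q).1 hQ
  have hQQ : Q * Q⁻¹ = 1 := Matrix.mul_nonsing_inv Q hQdet
  have hQQ' : Q⁻¹ * Q = 1 := Matrix.nonsing_inv_mul Q hQdet
  have hQA : Q⁻¹ * A = Matrix.diagonal μ * Q⁻¹ := by
    calc Q⁻¹ * A = (Q⁻¹ * A * Q) * Q⁻¹ := by rw [Matrix.mul_assoc, hQQ, Matrix.mul_one]
    _ = Matrix.diagonal μ * Q⁻¹ := by rw [hdiag]
  -- substitutions
  set f : Fin n → MvPolynomial (Fin n) ℂ := fun i => ∑ j : Fin n, Q⁻¹ i j • X j with hf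
  set g : Fin n → MvPolynomial (Fin n) ℂ := fun i => ∑ j : Fin n, Q i j • X j with hg
  have haev : ∀ (B C : Matrix (Fin n) (Fin n) ℂ) (i : Fin n),
      aeval (R := ℂ) (fun t => ∑ j : Fin n, B t j • (X j : MvPolynomial (Fin n) ℂ))
        (∑ j : Fin n, C i j • X j) = ∑ l : Fin n, (C * B) i l • X l := by
    intro B C i
    rw [map_sum, ← sum_smul_swap]
    refine Finset.sum_congr rfl fun j _ => ?_
    rw [map_smul, aeval_X]
  have hone : ∀ i : Fin n, ∑ l : Fin n, (1 : Matrix (Fin n) (Fin n) ℂ) i l • X l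
      = (X i : MvPolynomial (Fin n) ℂ) := by
    intro i
    rw [Finset.sum_eq_single i] <;> simp +contextual [Matrix.one_apply, eq_comm]
  have hφψ : ∀ p, aeval (R := ℂ) f (aeval (R := ℂ) g p) = p := by
    intro p
    have : (aeval (R := ℂ) f).comp (aeval (R := ℂ) g) = AlgHom.id ℂ _ := by
      apply MvPolynomial.algHom_ext
      intro i
      rw [AlgHom.comp_apply, aeval_X, AlgHom.id_apply, hg, hf, haev, hQQ, hone]
    calc aeval (R := ℂ) f (aeval (R := ℂ) g p)
        = ((aeval (R := ℂ) f).comp (aeval (R := ℂ) g)) p := rfl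
      _ = p := by rw [this, AlgHom.id_apply]
  have hψφ : ∀ p, aeval (R := ℂ) g (aeval (R := ℂ) f p) = p := by
    intro p
    have : (aeval (R := ℂ) g).comp (aeval (R := ℂ) f) = AlgHom.id ℂ _ := by
      apply MvPolynomial.algHom_ext
      intro i
      rw [AlgHom.comp_apply, aeval_X, AlgHom.id_apply, hf, hg, haev, hQQ', hone]
    calc aeval (R := ℂ) g (aeval (R := ℂ) f p)
        = ((aeval (R := ℂ) g).comp (aeval (R := ℂ) f)) p := rfl
      _ = p := by rw [this, AlgHom.id_apply]
  -- intertwining : D ∘ φ = φ ∘ D'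
  have hint : ∀ p, D (aeval (R := ℂ) f p) = aeval (R := ℂ) f (D' p) := by
    refine intertwine f D D' (fun i => ?_)
    have hLHS : D (aeval (R := ℂ) f (X i)) = ∑ l : Fin n, (Q⁻¹ * A) i l • X l := by
      rw [aeval_X, hf]
      simp only [map_sum, Derivation.map_smul]
      calc ∑ j : Fin n, Q⁻¹ i j • D (X j)
          = ∑ j : Fin n, Q⁻¹ i j • (∑ l : Fin n, A j l • X l) := by
            refine Finset.sum_congr rfl fun j _ => by rw [hD j]
        _ = ∑ l : Fin n, (Q⁻¹ * A) i l • X l := sum_smul_swap _ _ i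
    have hRHS : aeval (R := ℂ) f (D' (X i))
        = ∑ l : Fin n, (Matrix.diagonal μ * Q⁻¹) i l • X l := by
      rw [hD', mkDerivation_X, map_smul, aeval_X, hf, Finset.smul_sum]
      rw [show (Matrix.diagonal μ * Q⁻¹) = Matrix.diagonal μ * Q⁻¹ from rfl]
      refine Finset.sum_congr rfl fun l _ => ?_
      rw [smul_smul, Matrix.diagonal_mul]
    rw [hLHS, hRHS, hQA]
  -- the endomorphisms
  set E : Module.End ℂ (restrictTotalDegree (Fin n) ℂ k) :=
    (D : MvPolynomial (Fin n) ℂ →ₗ[ℂ] MvPolynomial (Fin n) ℂ).restrict hinv with hE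
  set E' : Module.End ℂ (restrictTotalDegree (Fin n) ℂ k) :=
    (D' : MvPolynomial (Fin n) ℂ →ₗ[ℂ] MvPolynomial (Fin n) ℂ).restrict hinv' with hE'
  have hEapp : ∀ p : restrictTotalDegree (Fin n) ℂ k,
      (E p : MvPolynomial (Fin n) ℂ) = D (p : MvPolynomial (Fin n) ℂ) :=
    fun p => rfl
  refine ⟨E, hEapp, ?_⟩
  -- conjugating equivalence of W_k
  have hfdeg : ∀ p ∈ restrictTotalDegree (Fin n) ℂ k,
      aeval (R := ℂ) f p ∈ restrictTotalDegree (Fin n) ℂ k := by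
    intro p hp
    rw [mem_restrictTotalDegree] at hp ⊢
    refine (deg_aeval_le f ?_ p).trans hp
    intro i; rw [hf]; exact hlin Q⁻¹ i
  have hgdeg : ∀ p ∈ restrictTotalDegree (Fin n) ℂ k,
      aeval (R := ℂ) g p ∈ restrictTotalDegree (Fin n) ℂ k := by
    intro p hp
    rw [mem_restrictTotalDegree] at hp ⊢
    refine (deg_aeval_le g ?_ p).trans hp
    intro i; rw [hg]; exact hlin Q i
  have hfdeg' : ∀ p ∈ restrictTotalDegree (Fin n) ℂ k,
      (aeval (R := ℂ) f).toLinearMap p ∈ restrictTotalDegree (Fin n) ℂ k := hfdeg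
  have hgdeg' : ∀ p ∈ restrictTotalDegree (Fin n) ℂ k,
      (aeval (R := ℂ) g).toLinearMap p ∈ restrictTotalDegree (Fin n) ℂ k := hgdeg
  have hcomp1 : ((aeval (R := ℂ) f).toLinearMap.restrict hfdeg').comp
      ((aeval (R := ℂ) g).toLinearMap.restrict hgdeg') = LinearMap.id := by
    apply LinearMap.ext; intro p; apply Subtype.ext
    rw [LinearMap.comp_apply, LinearMap.restrict_coe_apply, LinearMap.restrict_coe_apply,
      LinearMap.id_apply, AlgHom.toLinearMap_apply, AlgHom.toLinearMap_apply]
    exact hφψ _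
  have hcomp2 : ((aeval (R := ℂ) g).toLinearMap.restrict hgdeg').comp
      ((aeval (R := ℂ) f).toLinearMap.restrict hfdeg') = LinearMap.id := by
    apply LinearMap.ext; intro p; apply Subtype.ext
    rw [LinearMap.comp_apply, LinearMap.restrict_coe_apply, LinearMap.restrict_coe_apply,
      LinearMap.id_apply, AlgHom.toLinearMap_apply, AlgHom.toLinearMap_apply]
    exact hψφ _
  set Φ : restrictTotalDegree (Fin n) ℂ k ≃ₗ[ℂ] restrictTotalDegree (Fin n) ℂ k :=
    LinearEquiv.ofLinear ((aeval (R := ℂ) f).toLinearMap.restrict hfdeg')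
      ((aeval (R := ℂ) g).toLinearMap.restrict hgdeg') hcomp1 hcomp2 with hΦ
  have hΦapp : ∀ x : restrictTotalDegree (Fin n) ℂ k,
      ((Φ x : MvPolynomial (Fin n) ℂ)) = aeval (R := ℂ) f (x : MvPolynomial (Fin n) ℂ) := by
    intro x
    rw [hΦ, LinearEquiv.ofLinear_apply, LinearMap.restrict_coe_apply, AlgHom.toLinearMap_apply]
  have hΦsymm : ∀ x : restrictTotalDegree (Fin n) ℂ k,
      ((Φ.symm x : MvPolynomial (Fin n) ℂ)) = aeval (R := ℂ) g (x : MvPolynomial (Fin n) ℂ) := by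
    intro x
    rw [hΦ, LinearEquiv.ofLinear_symm_apply, LinearMap.restrict_coe_apply,
      AlgHom.toLinearMap_apply]
  have hconjE : Φ.conjAlgEquiv ℂ E' = E := by
    apply LinearMap.ext; intro p; apply Subtype.ext
    have h0 : Φ.conjAlgEquiv ℂ E' p = Φ (E' (Φ.symm p)) := rfl
    have hE'app : ((E' (Φ.symm p) : MvPolynomial (Fin n) ℂ)) = D' ↑(Φ.symm p) := rfl
    rw [h0, hΦapp, hE'app, hΦsymm, ← hint, hφψ]
    exact (hEapp p).symm
  rw [← hconjE, AlgEquiv.spectrum_eq]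
  -- spectrum of the diagonal derivation
  apply Set.eq_of_subset_of_subset
  · intro z hz
    have hev : Module.End.HasEigenvalue E' z := Module.End.hasEigenvalue_iff_mem_spectrum.2 hz
    obtain ⟨v, hv⟩ := hev.exists_hasEigenvector
    have hv1 : D' (v : MvPolynomial (Fin n) ℂ) = z • (v : MvPolynomial (Fin n) ℂ) := by
      have h1 := Module.End.mem_eigenspace_iff.1 hv.1
      have h2 : (E' v : MvPolynomial (Fin n) ℂ)
          = ((z • v : restrictTotalDegree (Fin n) ℂ k) : MvPolynomial (Fin n) ℂ) :=
        congrArg _ h1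
      rw [Submodule.coe_smul] at h2
      exact h2
    have hv0 : (v : MvPolynomial (Fin n) ℂ) ≠ 0 := fun h => hv.2 (Subtype.ext h)
    have hsupp : (v : MvPolynomial (Fin n) ℂ).support.Nonempty :=
      Finset.nonempty_iff_ne_empty.2 fun h => hv0 (support_eq_empty.1 h)
    obtain ⟨m, hm⟩ := hsupp
    have hcoeff := congrArg (coeff m) hv1
    rw [hD', coeff_diagDeriv, coeff_smul, smul_eq_mul] at hcoeff
    have hc0 : coeff m (v : MvPolynomial (Fin n) ℂ) ≠ 0 := mem_support_iff.1 hm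
    have hz' : z = wt μ m := by
      have := mul_right_cancel₀ hc0 hcoeff
      exact this.symm
    have hdle : (m.sum fun _ e => e) ≤ k :=
      le_trans (le_totalDegree hm) ((mem_restrictTotalDegree _ _ _).1 v.2)
    by_cases hd0 : (m.sum fun _ e => e) = 0
    · left
      obtain ⟨c, hc⟩ := exists_enum μ m hd0
      rw [hz', hc]
      simp
    · right
      obtain ⟨c, hc⟩ := exists_enum μ m rfl
      exact ⟨_, Nat.one_le_iff_ne_zero.2 hd0, hdle, c, by rw [hz', hc]⟩
  · rintro z (rfl | ⟨j, hj1, hjk, c, rfl⟩)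
    · -- zero is an eigenvalue with eigenvector 1
      have hmem : (1 : MvPolynomial (Fin n) ℂ) ∈ restrictTotalDegree (Fin n) ℂ k := by
        rw [mem_restrictTotalDegree, totalDegree_one]
        exact Nat.zero_le k
      refine Module.End.hasEigenvalue_iff_mem_spectrum.1
        (Module.End.hasEigenvalue_of_hasEigenvector (x := ⟨1, hmem⟩) ⟨?_, ?_⟩)
      · rw [Module.End.mem_eigenspace_iff]
        apply Subtype.ext
        rw [Submodule.coe_smul]
        show D' (1 : MvPolynomial (Fin n) ℂ) = (0 : ℂ) • (1 : MvPolynomial (Fin n) ℂ)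
        rw [Derivation.map_one_eq_zero, zero_smul]
      · intro h
        exact one_ne_zero (congrArg (Subtype.val) h)
    · -- sums of j eigenvalues
      set m : Fin n →₀ ℕ := ∑ i : Fin j, Finsupp.single (c i) 1 with hm
      have hdeg : (m.sum fun _ e => e) = j := by
        rw [hm, degm_sum]
        simp [Finsupp.sum_single_index]
      have hwt : wt μ m = ∑ i : Fin j, μ (c i) := by
        rw [hm, wt_sum]
        exact Finset.sum_congr rfl fun i _ => wt_single μ (c i)
      have hmem : (monomial m (1:ℂ) : MvPolynomial (Fin n) ℂ)
          ∈ restrictTotalDegree (Fin n) ℂ k := by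
        rw [mem_restrictTotalDegree, totalDegree_monomial m (one_ne_zero), hdeg]
        exact hjk
      refine Module.End.hasEigenvalue_iff_mem_spectrum.1
        (Module.End.hasEigenvalue_of_hasEigenvector (x := ⟨monomial m 1, hmem⟩) ⟨?_, ?_⟩)
      · rw [Module.End.mem_eigenspace_iff]
        apply Subtype.ext
        rw [Submodule.coe_smul]
        show D' (monomial m (1:ℂ)) = _ • (monomial m (1:ℂ) : MvPolynomial (Fin n) ℂ)
        rw [hD', diagDeriv_monomial, hwt]
      · intro h
        have := congrArg (Subtype.val) h
        simp only [Submodule.coe_zero] at this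
        exact one_ne_zero ((monomial_eq_zero).1 this)
end

section
/- Let A and Q be d×d complex matrices with Q invertible, let Λ : Fin d → ℂ satisfy Q⁻¹·A·Q = diagonal(Λ), and let û ∈ ℂ^d. Over the index type Unit ⊕ Fin d define the block matrices 𝒜₁ = fromBlocks 0 0 (col(A·û)) A and Q_𝒜 = fromBlocks 1 0 (col(−û)) Q, where col(v) denotes the (Fin d)×Unit column matrix with entries v, A·û is the matrix–vector product, and the upper-left blocks are 1×1. Then Q_𝒜 is invertible and Q_𝒜⁻¹ · 𝒜₁ · Q_𝒜 = fromBlocks 0 0 0 (diagonal(Λ)). -/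
open Matrix

/-- Let `A, Q` be `d × d` complex matrices with `Q` invertible and `Q⁻¹ * A * Q = diagonal Λ`,
and let `u₀ ∈ ℂ^d`. Over `Unit ⊕ Fin d`, the block matrices
`𝒜₁ = fromBlocks 0 0 (col (A *ᵥ u₀)) A` and `Q_𝒜 = fromBlocks 1 0 (col (-u₀)) Q` satisfy:
`Q_𝒜` is invertible and `Q_𝒜⁻¹ * 𝒜₁ * Q_𝒜 = fromBlocks 0 0 0 (diagonal Λ)`. -/
theorem stmt_13 (d : ℕ) (A Q : Matrix (Fin d) (Fin d) ℂ) (hQ : IsUnit Q)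
    (Λ : Fin d → ℂ) (hdiag : Q⁻¹ * A * Q = diagonal Λ)
    (u₀ : Fin d → ℂ) :
    IsUnit (fromBlocks (1 : Matrix Unit Unit ℂ) 0 (replicateCol Unit (-u₀)) Q) ∧
      (fromBlocks (1 : Matrix Unit Unit ℂ) 0 (replicateCol Unit (-u₀)) Q)⁻¹ *
          fromBlocks (0 : Matrix Unit Unit ℂ) 0 (replicateCol Unit (A *ᵥ u₀)) A *
          fromBlocks (1 : Matrix Unit Unit ℂ) 0 (replicateCol Unit (-u₀)) Q =
        fromBlocks (0 : Matrix Unit Unit ℂ) 0 0 (diagonal Λ) := by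
  refine ⟨isUnit_fromBlocks_zero₁₂.mpr ⟨isUnit_one, hQ⟩, ?_⟩
  have hcol : replicateCol Unit (-u₀) = -replicateCol Unit u₀ := by ext i j; simp
  have key : fromBlocks (0 : Matrix Unit Unit ℂ) 0 (replicateCol Unit (A *ᵥ u₀)) A *
      fromBlocks (1 : Matrix Unit Unit ℂ) 0 (replicateCol Unit (-u₀)) Q =
      fromBlocks 0 0 0 (A * Q) := by
    rw [fromBlocks_multiply]
    simp [hcol, replicateCol_mulVec, Matrix.mul_neg]
  rw [Matrix.mul_assoc, key,
    inv_fromBlocks_zero₁₂_of_isUnit_iff _ _ _ (by simp [hQ]),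
    fromBlocks_multiply, ← hdiag]
  simp [Matrix.mul_assoc]
end

section
/- Let λ ∈ ℝ with λ ≠ 0, let ε > 0, let a ≤ b be real numbers, and set P = πε/|λ|. Let β : ℝ → ℂ be continuous on [a,b], let B ≥ 0 satisfy ‖β(s)‖ ≤ B for all s ∈ [a,b], and let δ ≥ 0 satisfy ‖β(s + P) − β(s)‖ ≤ δ for all s ∈ [a, b − P]. Then ‖∫_a^b e^{−iλs/ε}·β(s) ds‖ ≤ (b − a)·δ/2 + 2·P·B. -/
/-- Period-decomposition estimate: let `lam ≠ 0`, `ε > 0`, `a ≤ b`, and `P = π ε / |lam|` the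
half-period of the oscillator `s ↦ exp (-i lam s / ε)`. If `β` is continuous on `[a, b]`, bounded
by `B` there, and its half-period differences are bounded by `δ`, then
`‖∫_a^b exp (-i lam s / ε) β s ds‖ ≤ (b - a) δ / 2 + 2 P B`. -/
theorem stmt_14 (lam ε a b : ℝ) (hlam : lam ≠ 0) (hε : 0 < ε) (hab : a ≤ b)
    (P : ℝ) (hP : P = Real.pi * ε / |lam|)
    (β : ℝ → ℂ) (hβ : ContinuousOn β (Set.Icc a b))
    (B : ℝ) (hB : 0 ≤ B) (hβB : ∀ s ∈ Set.Icc a b, ‖β s‖ ≤ B)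
    (δ : ℝ) (hδ : 0 ≤ δ) (hβδ : ∀ s ∈ Set.Icc a (b - P), ‖β (s + P) - β s‖ ≤ δ) :
    ‖∫ s in a..b, Complex.exp (-Complex.I * lam * s / ε) * β s‖ ≤
      (b - a) * δ / 2 + 2 * P * B := by
  have hlam' : (0:ℝ) < |lam| := abs_pos.mpr hlam
  have hPpos : 0 < P := by
    rw [hP]; positivity
  set e : ℝ → ℂ := fun s => Complex.exp (-Complex.I * lam * s / ε) with he_def
  have hnorme : ∀ s : ℝ, ‖e s‖ = 1 := by
    intro s
    have h1 : (-Complex.I * lam * s / ε : ℂ) = ((-(lam*s/ε) : ℝ) : ℂ) * Complex.I := by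
      push_cast
      field_simp
    simp only [he_def, h1]
    simpa using Complex.norm_exp_ofReal_mul_I (-(lam*s/ε))
  have hecont : Continuous e := by
    apply Complex.continuous_exp.comp
    fun_prop
  set f : ℝ → ℂ := fun s => e s * β s with hf_def
  have hnormf : ∀ s ∈ Set.Icc a b, ‖f s‖ ≤ B := by
    intro s hs
    simp only [hf_def, norm_mul, hnorme s, one_mul]
    exact hβB s hs
  have hfcont : ContinuousOn f (Set.Icc a b) := hecont.continuousOn.mul hβ
  have hfi : ∀ c d : ℝ, a ≤ c → c ≤ d → d ≤ b → IntervalIntegrable f MeasureTheory.volume c d := by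
    intro c d h1 h2 h3
    apply (hfcont.mono ?_).intervalIntegrable
    rw [Set.uIcc_of_le h2]
    exact Set.Icc_subset_Icc h1 h3
  rcases lt_or_ge (b - P) a with hcase | hcase
  · -- short interval: direct bound
    have h1 : ‖∫ s in a..b, f s‖ ≤ B * |b - a| := by
      apply intervalIntegral.norm_integral_le_of_norm_le_const
      intro x hx
      rw [Set.uIoc_of_le hab] at hx
      exact hnormf x ⟨le_of_lt hx.1, hx.2⟩
    have h2 : |b - a| = b - a := abs_of_nonneg (by linarith)
    have : B * (b - a) ≤ 2 * P * B := by nlinarith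
    calc ‖∫ s in a..b, f s‖ ≤ B * (b - a) := by rwa [h2] at h1
      _ ≤ 2 * P * B := this
      _ ≤ (b - a) * δ / 2 + 2 * P * B := by nlinarith
  · -- main case: a ≤ b - P
    set g : ℝ → ℂ := fun s => e s * β (s + P) with hg_def
    have hexpP : Complex.exp (-Complex.I * lam * P / ε) = -1 := by
      rcases lt_or_gt_of_ne hlam with hneg | hpos
      · have habs : |lam| = -lam := abs_of_neg hneg
        have hval : lam * P / ε = -Real.pi := by
          rw [hP, habs]; field_simp; try ring
        have harg : (-Complex.I * lam * P / ε : ℂ) = (Real.pi : ℂ) * Complex.I := by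
          have : (-Complex.I * lam * P / ε : ℂ) = -((lam * P / ε : ℝ) : ℂ) * Complex.I := by
            push_cast; field_simp; try ring
          rw [this, hval]; push_cast; ring
        rw [harg, Complex.exp_pi_mul_I]
      · have habs : |lam| = lam := abs_of_pos hpos
        have hval : lam * P / ε = Real.pi := by
          rw [hP, habs]; field_simp; try ring
        have harg : (-Complex.I * lam * P / ε : ℂ) = -((Real.pi : ℂ) * Complex.I) := by
          have : (-Complex.I * lam * P / ε : ℂ) = -((lam * P / ε : ℝ) : ℂ) * Complex.I := by
            push_cast; field_simp; try ring
          rw [this, hval]; ring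
        rw [harg, Complex.exp_neg, Complex.exp_pi_mul_I]
        norm_num
    have hflip : ∀ s : ℝ, f (s + P) = -g s := by
      intro s
      have harg : (-Complex.I * lam * (s + P) / ε : ℂ) =
          -Complex.I * lam * s / ε + -Complex.I * lam * P / ε := by
        field_simp; try ring
      simp only [hf_def, hg_def, he_def]
      push_cast
      rw [harg, Complex.exp_add, hexpP]
      ring
    have hgcont : ContinuousOn g (Set.Icc (a - P) (b - P)) := by
      apply hecont.continuousOn.mul
      apply hβ.comp (continuous_id.add continuous_const).continuousOn
      intro x hx
      simp only [Set.mem_Icc, Pi.add_apply, id_eq]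
      exact ⟨by linarith [hx.1], by linarith [hx.2]⟩
    have hgi : ∀ c d : ℝ, a - P ≤ c → c ≤ d → d ≤ b - P →
        IntervalIntegrable g MeasureTheory.volume c d := by
      intro c d h1 h2 h3
      apply (hgcont.mono ?_).intervalIntegrable
      rw [Set.uIcc_of_le h2]
      exact Set.Icc_subset_Icc h1 h3
    -- shift identity
    have hshift : (∫ s in a..b, f s) = -∫ s in (a - P)..(b - P), g s := by
      have h1 : (∫ s in (a - P)..(b - P), f (s + P)) = ∫ s in a..b, f s := by
        rw [intervalIntegral.integral_comp_add_right f P]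
        norm_num
      have h2 : (∫ s in (a - P)..(b - P), f (s + P)) = ∫ s in (a - P)..(b - P), -g s := by
        apply intervalIntegral.integral_congr
        intro x _
        exact hflip x
      rw [← h1, h2, intervalIntegral.integral_neg]
    have hbP : b - P ≤ b := by linarith
    have haP : a - P ≤ a := by linarith
    -- splitting
    have hsplitf : (∫ s in a..b, f s) = (∫ s in a..(b - P), f s) + ∫ s in (b - P)..b, f s := by
      rw [intervalIntegral.integral_add_adjacent_intervals
        (hfi a (b - P) le_rfl hcase hbP) (hfi (b - P) b hcase hbP le_rfl)]
    have hsplitg : (∫ s in (a - P)..(b - P), g s) =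
        (∫ s in (a - P)..a, g s) + ∫ s in a..(b - P), g s := by
      rw [intervalIntegral.integral_add_adjacent_intervals
        (hgi (a - P) a le_rfl haP (by linarith)) (hgi a (b - P) haP hcase le_rfl)]
    have hdiff : (∫ s in a..(b-P), f s) - (∫ s in a..(b-P), g s)
        = ∫ s in a..(b-P), (f s - g s) := by
      rw [intervalIntegral.integral_sub (hfi a (b - P) le_rfl hcase hbP)
        (hgi a (b - P) haP hcase le_rfl)]
    -- estimates
    have E1 : ‖∫ s in a..(b-P), (f s - g s)‖ ≤ δ * (b - P - a) := by
      have := intervalIntegral.norm_integral_le_of_norm_le_const (a := a) (b := b - P)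
        (C := δ) (f := fun s => f s - g s) ?_
      · rwa [abs_of_nonneg (by linarith : (0:ℝ) ≤ b - P - a)] at this
      · intro x hx
        rw [Set.uIoc_of_le hcase] at hx
        have hx' : x ∈ Set.Icc a (b - P) := ⟨le_of_lt hx.1, hx.2⟩
        show ‖f x - g x‖ ≤ δ
        have : f x - g x = e x * (β x - β (x + P)) := by
          simp only [hf_def, hg_def]; ring
        rw [this, norm_mul, hnorme x, one_mul, ← norm_neg]
        simpa using hβδ x hx'
    have E2 : ‖∫ s in (b-P)..b, f s‖ ≤ B * P := by
      have := intervalIntegral.norm_integral_le_of_norm_le_const (a := b - P) (b := b)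
        (C := B) (f := f) ?_
      · calc ‖∫ s in (b-P)..b, f s‖ ≤ B * |b - (b - P)| := this
          _ = B * P := by rw [abs_of_nonneg (by linarith)]; ring_nf
      · intro x hx
        rw [Set.uIoc_of_le hbP] at hx
        exact hnormf x ⟨by linarith [hx.1], hx.2⟩
    have E3 : ‖∫ s in (a-P)..a, g s‖ ≤ B * P := by
      have := intervalIntegral.norm_integral_le_of_norm_le_const (a := a - P) (b := a)
        (C := B) (f := g) ?_
      · calc ‖∫ s in (a-P)..a, g s‖ ≤ B * |a - (a - P)| := this
          _ = B * P := by rw [abs_of_nonneg (by linarith)]; ring_nf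
      · intro x hx
        rw [Set.uIoc_of_le haP] at hx
        simp only [hg_def, norm_mul, hnorme x, one_mul]
        exact hβB (x + P) ⟨by linarith [hx.1], by linarith [hx.2]⟩
    -- combine
    have hcomb : (∫ s in a..b, f s) + (∫ s in a..b, f s) =
        (∫ s in a..(b-P), (f s - g s)) + (∫ s in (b-P)..b, f s) - ∫ s in (a-P)..a, g s := by
      rw [← hdiff]
      nth_rewrite 2 [hshift]
      rw [hsplitf, hsplitg]
      ring
    have hnorm2 : ‖(∫ s in a..b, f s) + (∫ s in a..b, f s)‖ = 2 * ‖∫ s in a..b, f s‖ := by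
      rw [← two_smul ℂ (∫ s in a..b, f s)]
      simp [norm_smul]
    have hfinal : 2 * ‖∫ s in a..b, f s‖ ≤ δ * (b - P - a) + B * P + B * P := by
      rw [← hnorm2, hcomb]
      calc ‖(∫ s in a..(b-P), (f s - g s)) + (∫ s in (b-P)..b, f s) - ∫ s in (a-P)..a, g s‖
          ≤ ‖(∫ s in a..(b-P), (f s - g s)) + (∫ s in (b-P)..b, f s)‖ + ‖∫ s in (a-P)..a, g s‖ :=
            norm_sub_le _ _
        _ ≤ ‖∫ s in a..(b-P), (f s - g s)‖ + ‖∫ s in (b-P)..b, f s‖ + ‖∫ s in (a-P)..a, g s‖ := by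
            have := norm_add_le (∫ s in a..(b-P), (f s - g s)) (∫ s in (b-P)..b, f s)
            linarith
        _ ≤ δ * (b - P - a) + B * P + B * P := by linarith
    nlinarith [norm_nonneg (∫ s in a..b, f s)]
end

section
/- Let M and N be n×n complex matrices, let a ≤ b be real numbers, and let C₁ > 0 satisfy ‖exp(t • M)‖ ≤ C₁ for all t ∈ [0, b − a] (operator norm induced by the Euclidean norm on ℂ^n). Let R : ℝ → ℂ^n be continuous with ‖R(t)‖ ≤ ρ for all t ∈ [a,b]. Suppose x, y : ℝ → ℂ^n are differentiable on [a,b] with x(a) = y(a) and, for all t ∈ [a,b], x′(t) = M·x(t) + N·x(t) + R(t) and y′(t) = M·y(t) + N·y(t) (matrix–vector products). Then ‖x(b) − y(b)‖ ≤ C₁·ρ·(b − a)·exp(C₁·‖N‖·(b − a)). -/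
set_option maxHeartbeats 1000000

open NormedSpace

private lemma gronwallBound_le_aux {K ε x : ℝ} (hK : 0 ≤ K) (hε : 0 ≤ ε) (hx : 0 ≤ x) :
    gronwallBound 0 K ε x ≤ ε * x * Real.exp (K * x) := by
  rcases eq_or_lt_of_le hK with hK0 | hKpos
  · rw [← hK0, gronwallBound_K0]
    simp only [zero_mul, Real.exp_zero, mul_one, zero_add]
    exact le_rfl
  · rw [gronwallBound_of_K_ne_0 hKpos.ne']
    simp only
    rw [zero_mul, zero_add, div_mul_eq_mul_div, div_le_iff₀ hKpos]
    have hmul : Real.exp (-(K * x)) * Real.exp (K * x) = 1 := by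
      rw [← Real.exp_add]; simp
    have h1 : Real.exp (K * x) - 1 ≤ K * x * Real.exp (K * x) := by
      nlinarith [Real.add_one_le_exp (-(K * x)), Real.exp_pos (K * x)]
    nlinarith [mul_le_mul_of_nonneg_left h1 hε, Real.exp_pos (K * x)]

private lemma flow_hasDerivAt {E : Type*} [NormedAddCommGroup E] [NormedSpace ℂ E]
    [CompleteSpace E] (A : E →L[ℂ] E) (t s : ℝ) :
    HasDerivAt (fun s' : ℝ => exp ((t - s') • A)) (-(exp ((t - s) • A) * A)) s := by
  have hcurve : HasDerivAt (fun u : ℝ => exp (u • A)) (exp ((t - s) • A) * A) (t - s) := by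
    exact hasDerivAt_exp_smul_const (𝕂 := ℝ) A (t - s)
  have hts : HasDerivAt (fun s' : ℝ => t - s') (-1) s := by
    simpa using (hasDerivAt_id s).const_sub t
  simpa [Function.comp_def] using HasDerivAt.scomp s hcurve hts

private lemma flow_apply_hasDerivWithinAt {E : Type*} [NormedAddCommGroup E] [NormedSpace ℂ E]
    [CompleteSpace E] (A : E →L[ℂ] E) {z : ℝ → E} {z' : E} {S : Set ℝ} (t : ℝ) {s : ℝ}
    (hz : HasDerivWithinAt z z' S s) :
    HasDerivWithinAt (fun s' : ℝ => exp ((t - s') • A) (z s'))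
      (exp ((t - s) • A) (z' - A (z s))) S s := by
  set L := ContinuousLinearMap.restrictScalarsL ℂ E E ℝ ℝ with hLdef
  have hAr : HasDerivAt (fun s' : ℝ => L (exp ((t - s') • A)))
      (L (-(exp ((t - s) • A) * A))) s :=
    L.hasFDerivAt.comp_hasDerivAt s (flow_hasDerivAt A t s)
  have happ := (hAr.hasDerivWithinAt (s := S)).clm_apply hz
  convert happ using 1
  · rfl
  simp only [hLdef, ContinuousLinearMap.coe_restrict_scalarsL',
    ContinuousLinearMap.coe_restrictScalars', ContinuousLinearMap.neg_apply,
    ContinuousLinearMap.mul_apply, map_sub]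
  abel

/-- Local truncation estimate. Let `M, N` be `n × n` complex matrices, `a ≤ b`, and suppose
`‖exp (t • M)‖ ≤ C₁` for `t ∈ [0, b - a]` (operator norms induced by the Euclidean norm on `ℂⁿ`).
Let `R` be continuous on `[a, b]` with `‖R t‖ ≤ ρ` there. If `x, y` solve
`x' = M x + N x + R` and `y' = M y + N y` on `[a, b]` with `x a = y a`, then
`‖x b - y b‖ ≤ C₁ ρ (b - a) exp (C₁ ‖N‖ (b - a))`. -/
theorem stmt_15 (n : ℕ) (M N : Matrix (Fin n) (Fin n) ℂ) (a b : ℝ) (hab : a ≤ b)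
    (C₁ : ℝ) (hC₁ : 0 < C₁)
    (hM : ∀ t ∈ Set.Icc (0 : ℝ) (b - a),
      ‖Matrix.toEuclideanCLM (𝕜 := ℂ) (exp (t • M))‖ ≤ C₁)
    (R : ℝ → EuclideanSpace ℂ (Fin n)) (hRcont : ContinuousOn R (Set.Icc a b))
    (ρ : ℝ) (hRρ : ∀ t ∈ Set.Icc a b, ‖R t‖ ≤ ρ)
    (x y : ℝ → EuclideanSpace ℂ (Fin n)) (hxy : x a = y a)
    (hx : ∀ t ∈ Set.Icc a b, HasDerivWithinAt x
      (Matrix.toEuclideanCLM (𝕜 := ℂ) M (x t) + Matrix.toEuclideanCLM (𝕜 := ℂ) N (x t) + R t)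
      (Set.Icc a b) t)
    (hy : ∀ t ∈ Set.Icc a b, HasDerivWithinAt y
      (Matrix.toEuclideanCLM (𝕜 := ℂ) M (y t) + Matrix.toEuclideanCLM (𝕜 := ℂ) N (y t))
      (Set.Icc a b) t) :
    ‖x b - y b‖ ≤ C₁ * ρ * (b - a) *
      Real.exp (C₁ * ‖Matrix.toEuclideanCLM (𝕜 := ℂ) N‖ * (b - a)) := by
  classical
  set A : EuclideanSpace ℂ (Fin n) →L[ℂ] EuclideanSpace ℂ (Fin n) :=
    Matrix.toEuclideanCLM (𝕜 := ℂ) M with hAdef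
  set B : EuclideanSpace ℂ (Fin n) →L[ℂ] EuclideanSpace ℂ (Fin n) :=
    Matrix.toEuclideanCLM (𝕜 := ℂ) N with hBdef
  -- transfer the exponential bound to the CLM side
  have hexp : ∀ t : ℝ, Matrix.toEuclideanCLM (𝕜 := ℂ) (exp (t • M)) = exp (t • A) := by
    open scoped Matrix.Norms.L2Operator in
    intro t
    have hc : Continuous (Matrix.toEuclideanCLM (𝕜 := ℂ) (n := Fin n)) := by
      have : Isometry (Matrix.toEuclideanCLM (𝕜 := ℂ) (n := Fin n)) :=
        AddMonoidHomClass.isometry_of_norm _ (fun A => (Matrix.l2_opNorm_def A).symm)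
      exact this.continuous
    rw [map_exp_of_mem_ball (𝕂 := ℂ) _ hc _ ((expSeries_radius_eq_top ℂ (Matrix (Fin n) (Fin n) ℂ)).symm ▸ edist_lt_top _ _), ← algebraMap_smul ℂ t M,
      ← algebraMap_smul ℂ t (Matrix.toEuclideanCLM (𝕜 := ℂ) M), map_smul]
  have hMA : ∀ t ∈ Set.Icc (0 : ℝ) (b - a), ‖exp (t • A)‖ ≤ C₁ := by
    intro t ht; rw [← hexp t]; exact hM t ht
  -- the difference z
  set z : ℝ → EuclideanSpace ℂ (Fin n) := fun t => x t - y t with hzdef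
  have hza : z a = 0 := by simp [hzdef, hxy]
  have hzderiv : ∀ t ∈ Set.Icc a b,
      HasDerivWithinAt z (A (z t) + B (z t) + R t) (Set.Icc a b) t := by
    intro t ht
    have := (hx t ht).sub (hy t ht)
    refine this.congr_deriv ?_
    simp only [hzdef, map_sub]
    abel
  have hzc : ContinuousOn z (Set.Icc a b) := fun t ht => (hzderiv t ht).continuousWithinAt
  have hρ0 : 0 ≤ ρ := le_trans (norm_nonneg _) (hRρ a ⟨le_rfl, hab⟩)
  -- continuous extension of z to all of ℝ
  set zc : ℝ → EuclideanSpace ℂ (Fin n) :=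
    Set.IccExtend hab ((Set.Icc a b).restrict z) with hzcdef
  have hzcc : Continuous zc := (ContinuousOn.restrict hzc).Icc_extend'
  have hzceq : ∀ t ∈ Set.Icc a b, zc t = z t := by
    intro t ht
    rw [hzcdef, Set.IccExtend_of_mem hab _ ht]
    rfl
  set K : ℝ := C₁ * ‖B‖ with hKdef
  have hK0 : 0 ≤ K := mul_nonneg hC₁.le (norm_nonneg _)
  set h : ℝ → ℝ := fun s => C₁ * (‖B‖ * ‖zc s‖ + ρ) with hhdef
  have hhc : Continuous h := by
    apply continuous_const.mul (Continuous.add _ continuous_const)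
    exact continuous_const.mul hzcc.norm
  have hh0 : ∀ s, 0 ≤ h s := fun s =>
    mul_nonneg hC₁.le (add_nonneg (mul_nonneg (norm_nonneg _) (norm_nonneg _)) hρ0)
  set ψ : ℝ → ℝ := fun t => ∫ s in a..t, h s with hψdef
  -- Step 3: integral inequality via variation of constants
  have key : ∀ t ∈ Set.Icc a b, ‖z t‖ ≤ ψ t := by
    intro t ht
    obtain ⟨hat, htb⟩ := ht
    have hsub : Set.Icc a t ⊆ Set.Icc a b := Set.Icc_subset_Icc le_rfl htb
    set g : ℝ → EuclideanSpace ℂ (Fin n) := fun s => exp ((t - s) • A) (z s) with hgdef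
    set g' : ℝ → EuclideanSpace ℂ (Fin n) :=
      fun s => exp ((t - s) • A) (B (z s) + R s) with hg'def
    have hgd : ∀ s ∈ Set.Icc a t, HasDerivWithinAt g (g' s) (Set.Icc a t) s := by
      intro s hs
      have hzw : HasDerivWithinAt z (A (z s) + B (z s) + R s) (Set.Icc a t) s :=
        (hzderiv s (hsub hs)).mono hsub
      have hder := flow_apply_hasDerivWithinAt A t hzw
      have e : A (z s) + B (z s) + R s - A (z s) = B (z s) + R s := by abel
      rw [e] at hder
      exact hder
    have hgc : ContinuousOn g (Set.Icc a t) := fun s hs => (hgd s hs).continuousWithinAt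
    have hexpc : Continuous fun s : ℝ => exp ((t - s) • A) := by
      have hlin : Continuous fun s : ℝ => (t - s) • A :=
        ((continuous_const.sub continuous_id).smul continuous_const)
      exact (continuous_iff_continuousAt.2 fun x => (exp_analytic (𝕂 := ℂ) x).continuousAt).comp hlin
    have hg'c : ContinuousOn g' (Set.Icc a t) := by
      apply ContinuousOn.clm_apply (hexpc.continuousOn)
      exact (B.continuous.comp_continuousOn (hzc.mono hsub)).add (hRcont.mono hsub)
    have hint : IntervalIntegrable g' MeasureTheory.volume a t :=
      hg'c.intervalIntegrable_of_Icc hat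
    have hftc : ∫ s in a..t, g' s = g t - g a := by
      apply intervalIntegral.integral_eq_sub_of_hasDeriv_right_of_le hat hgc _ hint
      intro s hs
      apply (hgd s ⟨hs.1.le, hs.2.le⟩).mono_of_mem_nhdsWithin
      exact Filter.mem_of_superset (Ioc_mem_nhdsGT_of_mem ⟨le_rfl, hs.2⟩)
        (Set.Ioc_subset_Icc_self.trans (Set.Icc_subset_Icc hs.1.le le_rfl))
    have hga : g a = 0 := by simp [hgdef, hza]
    have hgt : g t = z t := by
      show exp ((t - t) • A) (z t) = z t
      rw [sub_self, zero_smul ℝ A, exp_zero, ContinuousLinearMap.one_apply]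
    have hnorm : ∀ s ∈ Set.Icc a t, ‖g' s‖ ≤ h s := by
      intro s hs
      have hts' : t - s ∈ Set.Icc (0 : ℝ) (b - a) :=
        ⟨sub_nonneg.2 hs.2, sub_le_sub htb hs.1⟩
      calc ‖g' s‖ ≤ ‖exp ((t - s) • A)‖ * ‖B (z s) + R s‖ :=
            ContinuousLinearMap.le_opNorm _ _
        _ ≤ C₁ * (‖B‖ * ‖z s‖ + ρ) := by
            apply mul_le_mul (hMA _ hts') _ (norm_nonneg _) hC₁.le
            calc ‖B (z s) + R s‖ ≤ ‖B (z s)‖ + ‖R s‖ := norm_add_le _ _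
              _ ≤ ‖B‖ * ‖z s‖ + ρ :=
                add_le_add (B.le_opNorm _) (hRρ s (hsub hs))
        _ = h s := by
            show C₁ * (‖B‖ * ‖z s‖ + ρ) = C₁ * (‖B‖ * ‖zc s‖ + ρ)
            rw [hzceq s (hsub hs)]
    calc ‖z t‖ = ‖∫ s in a..t, g' s‖ := by rw [hftc, hga, hgt, sub_zero]
      _ ≤ ∫ s in a..t, ‖g' s‖ := intervalIntegral.norm_integral_le_integral_norm hat
      _ ≤ ∫ s in a..t, h s := by
          apply intervalIntegral.integral_mono_on hat (hint.norm)
            (hhc.intervalIntegrable a t) hnorm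
      _ = ψ t := rfl
  -- Step 4: Gronwall for ψ
  have hψd : ∀ t : ℝ, HasDerivAt ψ (h t) t := fun t =>
    intervalIntegral.integral_hasDerivAt_right (hhc.intervalIntegrable a t)
      (hhc.stronglyMeasurableAtFilter _ _) hhc.continuousAt
  have hψa : ψ a = 0 := intervalIntegral.integral_same
  have grb : ‖ψ b‖ ≤ gronwallBound 0 K (C₁ * ρ) (b - a) := by
    apply norm_le_gronwallBound_of_norm_deriv_right_le
      (f := ψ) (f' := h) (δ := 0) (K := K) (ε := C₁ * ρ) (a := a) (b := b)
      (fun t _ => (hψd t).continuousAt.continuousWithinAt)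
      (fun t _ => (hψd t).hasDerivWithinAt)
      (by simp [hψa])
      _ b ⟨hab, le_rfl⟩
    intro t ht
    have h1 : ‖h t‖ = h t := Real.norm_of_nonneg (hh0 t)
    have h2 : ‖zc t‖ ≤ ‖ψ t‖ := by
      rw [hzceq t ⟨ht.1, ht.2.le⟩]
      exact (key t ⟨ht.1, ht.2.le⟩).trans (le_abs_self _)
    rw [h1, hhdef]
    have hstep : C₁ * (‖B‖ * ‖zc t‖ + ρ) ≤ C₁ * (‖B‖ * ‖ψ t‖ + ρ) := by
      apply mul_le_mul_of_nonneg_left _ hC₁.le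
      exact add_le_add_left (mul_le_mul_of_nonneg_left h2 (norm_nonneg _)) ρ
    calc C₁ * (‖B‖ * ‖zc t‖ + ρ) ≤ C₁ * (‖B‖ * ‖ψ t‖ + ρ) := hstep
      _ = K * ‖ψ t‖ + C₁ * ρ := by rw [hKdef]; ring
  -- Step 5: conclude
  have hfinal : gronwallBound 0 K (C₁ * ρ) (b - a) ≤
      C₁ * ρ * (b - a) * Real.exp (K * (b - a)) := by
    exact gronwallBound_le_aux hK0 (mul_nonneg hC₁.le hρ0) (sub_nonneg.2 hab)
  have hzb : ‖z b‖ ≤ ψ b := key b ⟨hab, le_rfl⟩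
  have hψb : ψ b ≤ ‖ψ b‖ := le_abs_self _
  have hxyz : ‖x b - y b‖ = ‖z b‖ := rfl
  rw [hxyz]
  calc ‖z b‖ ≤ ‖ψ b‖ := hzb.trans hψb
    _ ≤ gronwallBound 0 K (C₁ * ρ) (b - a) := grb
    _ ≤ C₁ * ρ * (b - a) * Real.exp (K * (b - a)) := hfinal
    _ = C₁ * ρ * (b - a) * Real.exp (C₁ * ‖B‖ * (b - a)) := by rw [hKdef]
end
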